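/- arXiv:1512.01573 — 8 statements merged into one kernel-verified Lean document; each statement's English description precedes it below -/
import Mathlib

section
/- Let f : F_2^n → F_2^n be a negative and-net and let S be the set of all negative cycles of G(f). If f admits an S-quasi-delocalizing function, then there exists a Boolean network g, obtained from f by a finite sequence of one-step expansions, which is an and-net and has no local negative cycle (for no state y does the local interaction graph G(g)(y) contain a negative cycle). -/
/-- States of a Boolean network on `n` components: `F_2^n`. -/
abbrev St (n : ℕ) := Fin n → ZMod 2

/-- The unit vector `e^i`. -/
def uv {n : ℕ} (i : Fin n) : St n := fun j => if j = i then 1 else 0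

/-- There is an edge from `j` to `i` in the local interaction graph `G(f)(x)`,
i.e. `∂_j f_i (x) = 1`. -/
def hasEdge {n : ℕ} (f : St n → St n) (x : St n) (j i : Fin n) : Prop :=
  f (x + uv j) i ≠ f x i

/-- `(j,i)` is a positive edge of `G(f)(x)`. -/
def edgePos {n : ℕ} (f : St n → St n) (x : St n) (j i : Fin n) : Prop :=
  hasEdge f x j i ∧ x j = f x i

/-- `(j,i)` is a negative edge of `G(f)(x)`. -/
def edgeNeg {n : ℕ} (f : St n → St n) (x : St n) (j i : Fin n) : Prop :=
  hasEdge f x j i ∧ x j ≠ f x i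

/-- The local interaction graph `G(f)(x)` has a negative (elementary, directed) cycle:
a cyclic sequence of pairwise distinct vertices, each consecutive pair being an edge of
`G(f)(x)`, with an odd number of negative edges. -/
def hasNegCycleAt {n : ℕ} (f : St n → St n) (x : St n) : Prop :=
  ∃ (m : ℕ) (v : Fin (m + 1) → Fin n), Function.Injective v ∧
    (∀ k, hasEdge f x (v k) (v (k + 1))) ∧
    Odd (Nat.card {k : Fin (m + 1) // edgeNeg f x (v k) (v (k + 1))})

/-- `f` is an and-net: each coordinate function is a product of literals. -/
def IsAndNet {n : ℕ} (f : St n → St n) : Prop :=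
  ∀ i : Fin n, ∃ P N : Finset (Fin n), Disjoint P N ∧
    ∀ x : St n, f x i = (∏ j ∈ P, x j) * ∏ j ∈ N, (x j + 1)

/-- `(j,i)` is a positive edge of the global interaction graph `G(f)`. -/
def gEdgePos {n : ℕ} (f : St n → St n) (j i : Fin n) : Prop := ∃ x, edgePos f x j i

/-- `(j,i)` is a negative edge of the global interaction graph `G(f)`. -/
def gEdgeNeg {n : ℕ} (f : St n → St n) (j i : Fin n) : Prop := ∃ x, edgeNeg f x j i

/-- `(j,i)` is an edge of the global interaction graph `G(f)`. -/
def gEdge {n : ℕ} (f : St n → St n) (j i : Fin n) : Prop := gEdgePos f j i ∨ gEdgeNeg f j i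

/-- `f` is a negative and-net: each coordinate function is a product of negated literals. -/
def IsNegAndNet {n : ℕ} (f : St n → St n) : Prop :=
  ∀ i : Fin n, ∃ N : Finset (Fin n), ∀ x : St n, f x i = ∏ j ∈ N, (x j + 1)

/-- `v` describes an elementary directed cycle of the global interaction graph `G(f)`. -/
def IsGCycle {n : ℕ} (f : St n → St n) {m : ℕ} (v : Fin (m + 1) → Fin n) : Prop :=
  Function.Injective v ∧ ∀ k, gEdge f (v k) (v (k + 1))

/-- `v` describes a negative cycle of `G(f)` (odd number of negative edges). -/
def IsNegGCycle {n : ℕ} (f : St n → St n) {m : ℕ} (v : Fin (m + 1) → Fin n) : Prop :=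
  IsGCycle f v ∧ Odd (Nat.card {k : Fin (m + 1) // gEdgeNeg f (v k) (v (k + 1))})

/-- `a` is a vertex of the cycle described by `v`. -/
def CycVertex {n m : ℕ} (v : Fin (m + 1) → Fin n) (a : Fin n) : Prop := ∃ k, v k = a

/-- `(a, b)` is an edge of the cycle described by `v`. -/
def CycEdge {n m : ℕ} (v : Fin (m + 1) → Fin n) (a b : Fin n) : Prop :=
  ∃ k, v k = a ∧ v (k + 1) = b

/-- `p` is a chord of the cycle `v` in `G(f)`: an edge of `G(f)` joining two vertices of
the cycle which is not an edge of the cycle. -/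
def IsChord {n : ℕ} (f : St n → St n) {m : ℕ} (v : Fin (m + 1) → Fin n)
    (p : Fin n × Fin n) : Prop :=
  gEdge f p.1 p.2 ∧ CycVertex v p.1 ∧ CycVertex v p.2 ∧ ¬ CycEdge v p.1 p.2

/-- `(χ₁, χ₂)` is an `S`-quasi-delocalizing function of `f`, where `S` is the set of all
negative cycles of `G(f)`: for each negative cycle `C`, `χ₁ C` is a chord `(i,k)` of `C`,
`χ₂ C` is the edge `(i,j)` of `C` starting from the same vertex `i`, and the images of
`χ₁` and `χ₂` (on `S`) are disjoint. -/
def QuasiDeloc {n : ℕ} (f : St n → St n)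
    (χ₁ χ₂ : (m : ℕ) → (Fin (m + 1) → Fin n) → Fin n × Fin n) : Prop :=
  (∀ (m : ℕ) (v : Fin (m + 1) → Fin n), IsNegGCycle f v →
      IsChord f v (χ₁ m v) ∧ CycEdge v (χ₂ m v).1 (χ₂ m v).2 ∧ (χ₁ m v).1 = (χ₂ m v).1) ∧
  (∀ (m : ℕ) (v : Fin (m + 1) → Fin n) (m' : ℕ) (v' : Fin (m' + 1) → Fin n),
      IsNegGCycle f v → IsNegGCycle f v' → χ₁ m v ≠ χ₂ m' v')

/-- `g` (on `m+1` variables) reduces over coordinate `c` to `h` (on `m` variables):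
`G(g)` has no loop on `c`, and `h` is obtained by substituting `g_c` for variable `c`. -/
def Reduces {m : ℕ} (c : Fin (m + 1)) (g : St (m + 1) → St (m + 1))
    (h : St m → St m) : Prop :=
  (∀ x : St (m + 1), g (x + uv c) c = g x c) ∧
  ∀ (x : St m) (i : Fin m),
    h x i = g (c.insertNth (g (c.insertNth 0 x) c) x) (c.succAbove i)

/-- `ExpandsTo f g`: `g` is obtained from `f` by a finite sequence of one-step
expansions (each step being the inverse of a reduction over some coordinate). -/
inductive ExpandsTo : {m : ℕ} → (St m → St m) → {m' : ℕ} → (St m' → St m') → Prop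
  | refl {m : ℕ} (f : St m → St m) : ExpandsTo f f
  | step {m : ℕ} {f : St m → St m} {m' : ℕ} {h : St m' → St m'}
      {g : St (m' + 1) → St (m' + 1)} (c : Fin (m' + 1)) :
      ExpandsTo f h → Reduces c g h → ExpandsTo f g


/-!
Write `x_b` for the variables of `f`. For each pair `e = (i, j)` add a copy `t_e` of `x_i`
and the conjunction `u_e = x_i ∧ t_e`. Coordinate `b` keeps the literal `¬x_l` when `(l, b)` is
a chord chosen by `χ₁`, replaces it by `¬u_(l,b)` otherwise, and gets an extra literal `¬t_e`
for each edge `e = χ₂ C` of a negative cycle `C` with `χ₁ C = (e.1, b)`. Every new variable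
depends only on earlier ones, so deleting them from the last one on is a chain of reductions,
and as all literals are idempotent it ends at `f`.

In a local negative cycle of the expansion the variables `x_b` occur in cyclic order, and the
vertices between two consecutive ones are copies of the first, so they project to a negative
cycle `C` of `G(f)`. Let `χ₁ C = (i, k)` and `χ₂ C = (i, j)`. As `(i, j)` is not a chosen
chord, the cycle passes from `x_i` to `x_j` through `u_(i,j)`, which needs `t_(i,j) = 1` or
`x_i = 1`. Both are inputs of `x_k`, and a local edge enters `x_k` only if all its other inputs
are `0`; so that input precedes `x_k` on the cycle, which leaves two successors for `x_i`.
-/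

open Finset

lemma ZMod.two_eq_zero_or_eq_one (a : ZMod 2) : a = 0 ∨ a = 1 := by revert a; decide

lemma ZMod.two_isIdempotentElem (a : ZMod 2) : IsIdempotentElem a := by
  rw [IsIdempotentElem]; revert a; decide

lemma prod_add_uv_ne_iff {m : ℕ} (S : Finset (Fin m)) (c : ZMod 2) (x : St m) (z : Fin m) :
    ∏ j ∈ S, ((x + uv z) j + c) ≠ ∏ j ∈ S, (x j + c) ↔
      z ∈ S ∧ ∀ j ∈ S, j ≠ z → x j + c = 1 := by
  by_cases hz : z ∈ S
  · have hrest : ∏ j ∈ S.erase z, ((x + uv z) j + c) = ∏ j ∈ S.erase z, (x j + c) :=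
      prod_congr rfl fun j hj => by simp [uv, ne_of_mem_erase hj]
    have hflip : ∀ a b R : ZMod 2, (a + 1 + b) * R ≠ (a + b) * R ↔ R ≠ 0 := by decide
    have h01 : ∀ a : ZMod 2, a ≠ 0 ↔ a = 1 := by decide
    have hzz : (x + uv z) z = x z + 1 := by simp [uv]
    rw [← mul_prod_erase S _ hz, ← mul_prod_erase S (fun j => x j + c) hz, hrest, hzz, hflip,
      prod_ne_zero_iff]
    simp only [mem_erase, h01]
    tauto
  · simp only [hz, false_and, iff_false, not_not]
    exact prod_congr rfl fun j hj => by simp [uv, ne_of_mem_of_not_mem hj hz]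

lemma prod_add_eq_of_forall_ne {m : ℕ} {S : Finset (Fin m)} {c : ZMod 2} {x : St m}
    {z : Fin m} (hz : z ∈ S) (h : ∀ j ∈ S, j ≠ z → x j + c = 1) :
    ∏ j ∈ S, (x j + c) = x z + c := by
  rw [← mul_prod_erase S _ hz,
    prod_eq_one fun j hj => h j (mem_of_mem_erase hj) (ne_of_mem_erase hj), mul_one]

lemma Finset.prod_comp_of_isIdempotentElem {ι κ M : Type*} [CommMonoid M] [DecidableEq κ]
    {s : Finset ι} (g : κ → M) (φ : ι → κ) (hg : ∀ b, IsIdempotentElem (g b)) :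
    ∏ a ∈ s, g (φ a) = ∏ b ∈ s.image φ, g b := by
  rw [prod_comp]
  refine prod_congr rfl fun b hb => (hg b).pow_eq ?_
  obtain ⟨a, ha, rfl⟩ := mem_image.1 hb
  exact card_ne_zero.2 ⟨a, by simp [ha]⟩

-- `x j + s i` is the literal `x j` if `s i = 0` and its negation if `s i = 1`.
def andNetOf {m : ℕ} (I : Fin m → Finset (Fin m)) (s : Fin m → ZMod 2) : St m → St m :=
  fun x i => ∏ j ∈ I i, (x j + s i)

section AndNetOf

variable {m : ℕ} {I : Fin m → Finset (Fin m)} {s : Fin m → ZMod 2} {x : St m} {z i : Fin m}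

lemma hasEdge_andNetOf_iff :
    hasEdge (andNetOf I s) x z i ↔ z ∈ I i ∧ ∀ j ∈ I i, j ≠ z → x j + s i = 1 :=
  prod_add_uv_ne_iff (I i) (s i) x z

lemma andNetOf_apply_of_hasEdge (h : hasEdge (andNetOf I s) x z i) :
    andNetOf I s x i = x z + s i :=
  let ⟨hz, hI⟩ := hasEdge_andNetOf_iff.1 h
  prod_add_eq_of_forall_ne hz hI

lemma edgeNeg_andNetOf_iff (h : hasEdge (andNetOf I s) x z i) :
    edgeNeg (andNetOf I s) x z i ↔ s i = 1 := by
  rw [edgeNeg, andNetOf_apply_of_hasEdge h, and_iff_right h]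
  rcases ZMod.two_eq_zero_or_eq_one (s i) with hs | hs <;> simp [hs]

lemma isAndNet_andNetOf : IsAndNet (andNetOf I s) := by
  intro i
  rcases ZMod.two_eq_zero_or_eq_one (s i) with hs | hs
  · exact ⟨I i, ∅, disjoint_empty_right _, fun x => by simp [andNetOf, hs]⟩
  · exact ⟨∅, I i, disjoint_empty_left _, fun x => by simp [andNetOf, hs]⟩

lemma gEdgeNeg_andNetOf_one_of_mem {j : Fin m} (hj : j ∈ I i) :
    gEdgeNeg (andNetOf I 1) j i := by
  have hE : hasEdge (andNetOf I 1) 0 j i :=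
    hasEdge_andNetOf_iff.2 ⟨hj, fun _ _ _ => by simp⟩
  exact ⟨0, (edgeNeg_andNetOf_iff hE).2 rfl⟩

lemma mem_of_gEdge_andNetOf {j : Fin m} (h : gEdge (andNetOf I s) j i) : j ∈ I i := by
  rcases h with ⟨x, hE, -⟩ | ⟨x, hE, -⟩ <;> exact (hasEdge_andNetOf_iff.1 hE).1

end AndNetOf

open Classical in
noncomputable def inNeighbors {n : ℕ} (f : St n → St n) (i : Fin n) : Finset (Fin n) :=
  univ.filter (gEdge f · i)

section NegAndNet

variable {n : ℕ} {f : St n → St n}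

lemma IsNegAndNet.eq_andNetOf (hf : IsNegAndNet f) : f = andNetOf (inNeighbors f) 1 := by
  choose N hN using hf
  obtain rfl : f = andNetOf N 1 := funext₂ fun x i => hN i x
  congr
  funext i; ext j
  simp only [inNeighbors, mem_filter, mem_univ, true_and]
  exact ⟨fun hj => Or.inr (gEdgeNeg_andNetOf_one_of_mem hj), mem_of_gEdge_andNetOf⟩

lemma IsNegAndNet.gEdgeNeg (hf : IsNegAndNet f) {j i : Fin n} (h : gEdge f j i) :
    gEdgeNeg f j i := by
  rw [hf.eq_andNetOf] at h ⊢
  exact gEdgeNeg_andNetOf_one_of_mem (mem_of_gEdge_andNetOf h)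

end NegAndNet

def IsTriangularFrom (n : ℕ) {m : ℕ} (g : St m → St m) : Prop :=
  ∀ w : Fin m, n ≤ (w : ℕ) → ∀ x x' : St m, (∀ j, j < w → x j = x' j) →
    g x w = g x' w

def reduceLast {m : ℕ} (g : St (m + 1) → St (m + 1)) : St m → St m :=
  fun x i => g (Fin.snoc x (g (Fin.snoc x 0) (Fin.last m))) i.castSucc

def peel (n : ℕ) : (s : ℕ) → (St (n + s) → St (n + s)) → St n → St n
  | 0, g => g
  | s + 1, g => peel n s (reduceLast g)

section Peel

variable {n s : ℕ}

lemma IsTriangularFrom.apply_last_eq {g : St (n + s + 1) → St (n + s + 1)}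
    (hg : IsTriangularFrom n g) {x x' : St (n + s + 1)}
    (h : ∀ j : Fin (n + s), x j.castSucc = x' j.castSucc) :
    g x (Fin.last _) = g x' (Fin.last _) :=
  hg _ (by simp) x x' fun j hj => by
    rw [← Fin.castSucc_castPred j hj.ne]
    exact h _

lemma IsTriangularFrom.reduceLast {g : St (n + s + 1) → St (n + s + 1)}
    (hg : IsTriangularFrom n g) : IsTriangularFrom n (reduceLast g) := by
  intro w hw x x' h
  refine hg w.castSucc hw _ _ fun j hj => ?_
  rw [← Fin.castSucc_castPred j (Fin.ne_last_of_lt hj), Fin.snoc_castSucc, Fin.snoc_castSucc]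
  exact h _ (Fin.castSucc_lt_castSucc_iff.1 (by simpa using hj))

lemma reduces_reduceLast {g : St (n + s + 1) → St (n + s + 1)} (hg : IsTriangularFrom n g) :
    Reduces (Fin.last (n + s)) g (reduceLast g) := by
  refine ⟨fun x => hg.apply_last_eq fun j => ?_, fun x i => ?_⟩
  · simp [uv, Fin.castSucc_ne_last]
  · simp [reduceLast]

lemma expandsTo_peel : ∀ {s : ℕ} (g : St (n + s) → St (n + s)), IsTriangularFrom n g →
    ExpandsTo (peel n s g) g
  | 0, g, _ => ExpandsTo.refl g
  | _ + 1, _, hg =>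
    ExpandsTo.step _ (expandsTo_peel _ hg.reduceLast) (reduces_reduceLast hg)

lemma reduceLast_init {g : St (n + s + 1) → St (n + s + 1)} (hg : IsTriangularFrom n g)
    {z : St (n + s + 1)} (hz : g z (Fin.last _) = z (Fin.last _)) (i : Fin (n + s)) :
    reduceLast g (Fin.init z) i = g z i.castSucc := by
  have hlast : g (Fin.snoc (Fin.init z) 0) (Fin.last _) = z (Fin.last _) :=
    (hg.apply_last_eq fun j => by simp [Fin.init]).trans hz
  rw [reduceLast, hlast, Fin.snoc_init_self]

lemma peel_apply : ∀ {s : ℕ} {g : St (n + s) → St (n + s)} (E : St n → St (n + s)),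
    IsTriangularFrom n g → (∀ x i, E x (Fin.castLE (Nat.le_add_right n s) i) = x i) →
    (∀ x (w : Fin (n + s)), n ≤ (w : ℕ) → g (E x) w = E x w) →
    ∀ x i, peel n s g x i = g (E x) (Fin.castLE (Nat.le_add_right n s) i)
  | 0, g, E, _, hE₀, _, x, i => by
    rw [show E x = x from funext (hE₀ x)]
    rfl
  | s + 1, g, E, hg, hE₀, hE, x, i => by
    have hlast : ∀ x, g (E x) (Fin.last _) = E x (Fin.last _) := fun x => hE x _ (by simp)
    rw [peel, peel_apply (fun x => Fin.init (E x)) hg.reduceLast (fun x i => hE₀ x i)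
      (fun x w hw => (reduceLast_init hg (hlast x) w).trans (hE x _ hw)) x i,
      reduceLast_init hg (hlast x)]
    rfl

end Peel

section CyclicEnumeration

open Fin.CommRing Classical

variable {M : ℕ} (P : Fin (M + 1) → Prop)

noncomputable def nextPos (k : Fin (M + 1)) : Fin (M + 1) :=
  if h : ∃ d : ℕ, 0 < d ∧ P (k + (d : Fin (M + 1))) then k + (Nat.find h : ℕ) else k

variable {P} {a : Fin (M + 1)}

lemma exists_pos_add (ha : P a) (k : Fin (M + 1)) :
    ∃ d : ℕ, 0 < d ∧ P (k + (d : Fin (M + 1))) :=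
  ⟨(a - k : Fin (M + 1)).val + (M + 1), by omega, by simpa using ha⟩

lemma nextPos_spec (ha : P a) (k : Fin (M + 1)) :
    ∃ g : ℕ, 0 < g ∧ nextPos P k = k + (g : Fin (M + 1)) ∧ P (k + (g : Fin (M + 1))) ∧
      ∀ r : ℕ, 0 < r → r < g → ¬ P (k + (r : Fin (M + 1))) :=
  have h := exists_pos_add ha k
  ⟨Nat.find h, (Nat.find_spec h).1, dif_pos h, (Nat.find_spec h).2,
    fun _ hr hrg hP => Nat.find_min h hrg ⟨hr, hP⟩⟩

lemma nextPos_mem (ha : P a) (k : Fin (M + 1)) : P (nextPos P k) :=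
  let ⟨_, _, hnext, hPg, _⟩ := nextPos_spec ha k
  hnext ▸ hPg

lemma exists_iterate_nextPos_eq_add (ha : P a) :
    ∀ (d : ℕ) (k : Fin (M + 1)), P k → P (k + (d : Fin (M + 1))) →
      ∃ r, (nextPos P)^[r] k = k + (d : Fin (M + 1)) := by
  intro d
  induction d using Nat.strong_induction_on with
  | _ d ih =>
    intro k hk hkd
    rcases Nat.eq_zero_or_pos d with rfl | hd
    · exact ⟨0, by simp⟩
    obtain ⟨g, hg, hnext, hPg, hmin⟩ := nextPos_spec ha k
    have hgd : g ≤ d := not_lt.1 fun hdg => hmin d hd hdg hkd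
    have hsplit : nextPos P k + ((d - g : ℕ) : Fin (M + 1)) = k + (d : Fin (M + 1)) := by
      rw [hnext, add_assoc, ← Nat.cast_add, Nat.add_sub_cancel' hgd]
    obtain ⟨r, hr⟩ := ih (d - g) (by omega) _ (hnext ▸ hPg) (hsplit ▸ hkd)
    exact ⟨r + 1, by rw [Function.iterate_succ_apply, hr, hsplit]⟩

lemma exists_iterate_nextPos_eq (ha : P a) {k q : Fin (M + 1)} (hk : P k) (hq : P q) :
    ∃ r, (nextPos P)^[r] k = q := by
  simpa using exists_iterate_nextPos_eq_add ha (q - k).val k hk (by simpa using hq)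

lemma exists_equiv_nextPos (ha : P a) :
    ∃ (m : ℕ) (ψ : Fin (m + 1) ≃ {k // P k}),
      ∀ r, (ψ (r + 1) : Fin (M + 1)) = nextPos P (ψ r) := by
  have hPit : ∀ r, P ((nextPos P)^[r] a) := fun r => by
    cases r with
    | zero => exact ha
    | succ r => rw [Function.iterate_succ_apply']; exact nextPos_mem ha _
  have hpos : 0 < Function.minimalPeriod (nextPos P) a := by
    obtain ⟨r, hr⟩ := exists_iterate_nextPos_eq ha (nextPos_mem ha a) ha
    exact Function.IsPeriodicPt.minimalPeriod_pos r.succ_pos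
      (by rw [Function.IsPeriodicPt, Function.IsFixedPt, Function.iterate_succ_apply, hr])
  obtain ⟨m, hm⟩ : ∃ m, Function.minimalPeriod (nextPos P) a = m + 1 :=
    ⟨_, (Nat.succ_pred_eq_of_pos hpos).symm⟩
  let ψ : Fin (m + 1) → {k // P k} := fun r => ⟨(nextPos P)^[r] a, hPit r⟩
  have hψ : Function.Bijective ψ := by
    refine ⟨fun r₁ r₂ h => Fin.ext ?_, fun ⟨q, hq⟩ => ?_⟩
    · exact Function.iterate_injOn_Iio_minimalPeriod (by rw [Set.mem_Iio, hm]; exact r₁.isLt)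
        (by rw [Set.mem_Iio, hm]; exact r₂.isLt) (congrArg Subtype.val h)
    · obtain ⟨r, hr⟩ := exists_iterate_nextPos_eq ha ha hq
      refine ⟨⟨r % (m + 1), Nat.mod_lt _ m.succ_pos⟩, Subtype.ext ?_⟩
      simp only [ψ, ← hm, Function.iterate_mod_minimalPeriod_eq]
      exact hr
  refine ⟨m, Equiv.ofBijective ψ hψ, fun r => ?_⟩
  simp only [Equiv.ofBijective_apply, ψ, Fin.val_add, Fin.val_one', Nat.add_mod_mod, ← hm,
    Function.iterate_mod_minimalPeriod_eq, Function.iterate_succ_apply']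

end CyclicEnumeration

abbrev expDim (n : ℕ) : ℕ := n + (n * n + n * n)

section Layout

variable {n : ℕ}

-- The variables of the expansion: `x_b`, then the block of the `t_e`, then that of the `u_e`.
def oIdx (b : Fin n) : Fin (expDim n) := Fin.castAdd _ b

def tIdx (e : Fin n × Fin n) : Fin (expDim n) :=
  Fin.natAdd n (Fin.castAdd (n * n) (finProdFinEquiv e))

def uIdx (e : Fin n × Fin n) : Fin (expDim n) :=
  Fin.natAdd n (Fin.natAdd (n * n) (finProdFinEquiv e))

def base : Fin (expDim n) → Fin n :=
  Fin.addCases (motive := fun _ => Fin n) id <|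
    Fin.addCases (fun i => (finProdFinEquiv.symm i).1) fun i => (finProdFinEquiv.symm i).1

@[simp] lemma val_oIdx (b : Fin n) : (oIdx b : ℕ) = b := rfl

@[simp] lemma val_tIdx (e : Fin n × Fin n) : (tIdx e : ℕ) = n + finProdFinEquiv e := rfl

@[simp] lemma val_uIdx (e : Fin n × Fin n) : (uIdx e : ℕ) = n + (n * n + finProdFinEquiv e) :=
  rfl

@[simp] lemma base_oIdx (b : Fin n) : base (oIdx b) = b := by simp [base, oIdx]

@[simp] lemma base_tIdx (e : Fin n × Fin n) : base (tIdx e) = e.1 := by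
  rw [base, tIdx, Fin.addCases_right, Fin.addCases_left, Equiv.symm_apply_apply]

@[simp] lemma base_uIdx (e : Fin n × Fin n) : base (uIdx e) = e.1 := by
  rw [base, uIdx, Fin.addCases_right, Fin.addCases_right, Equiv.symm_apply_apply]

lemma idx_cases (w : Fin (expDim n)) :
    (∃ b, w = oIdx b) ∨ (∃ e, w = tIdx e) ∨ ∃ e, w = uIdx e := by
  induction w using Fin.addCases with
  | left b => exact Or.inl ⟨b, rfl⟩
  | right w =>
    induction w using Fin.addCases with
    | left i =>
      exact Or.inr (Or.inl ⟨finProdFinEquiv.symm i, by rw [tIdx, Equiv.apply_symm_apply]⟩)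
    | right i =>
      exact Or.inr (Or.inr ⟨finProdFinEquiv.symm i, by rw [uIdx, Equiv.apply_symm_apply]⟩)

@[simp] lemma oIdx_inj {a b : Fin n} : oIdx a = oIdx b ↔ a = b := by
  simp [Fin.ext_iff]

@[simp] lemma tIdx_inj {d e : Fin n × Fin n} : tIdx d = tIdx e ↔ d = e := by
  rw [Fin.ext_iff, val_tIdx, val_tIdx, Nat.add_left_cancel_iff, ← Fin.ext_iff,
    finProdFinEquiv.apply_eq_iff_eq]

@[simp] lemma uIdx_inj {d e : Fin n × Fin n} : uIdx d = uIdx e ↔ d = e := by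
  rw [Fin.ext_iff, val_uIdx, val_uIdx, Nat.add_left_cancel_iff, Nat.add_left_cancel_iff,
    ← Fin.ext_iff, finProdFinEquiv.apply_eq_iff_eq]

lemma oIdx_lt_tIdx (b : Fin n) (e : Fin n × Fin n) : oIdx b < tIdx e := by
  rw [Fin.lt_def, val_oIdx, val_tIdx]; omega

lemma tIdx_lt_uIdx (d e : Fin n × Fin n) : tIdx d < uIdx e := by
  rw [Fin.lt_def, val_uIdx, val_tIdx]; have := (finProdFinEquiv d).isLt; omega

lemma oIdx_lt_uIdx (b : Fin n) (e : Fin n × Fin n) : oIdx b < uIdx e :=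
  (oIdx_lt_tIdx b e).trans (tIdx_lt_uIdx e e)

@[simp] lemma oIdx_ne_tIdx (b : Fin n) (e : Fin n × Fin n) : oIdx b ≠ tIdx e :=
  (oIdx_lt_tIdx b e).ne

@[simp] lemma oIdx_ne_uIdx (b : Fin n) (e : Fin n × Fin n) : oIdx b ≠ uIdx e :=
  (oIdx_lt_uIdx b e).ne

@[simp] lemma tIdx_ne_uIdx (d e : Fin n × Fin n) : tIdx d ≠ uIdx e := (tIdx_lt_uIdx d e).ne

@[simp] lemma tIdx_ne_oIdx (b : Fin n) (e : Fin n × Fin n) : tIdx e ≠ oIdx b :=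
  (oIdx_ne_tIdx b e).symm

@[simp] lemma uIdx_ne_oIdx (b : Fin n) (e : Fin n × Fin n) : uIdx e ≠ oIdx b :=
  (oIdx_ne_uIdx b e).symm

@[simp] lemma uIdx_ne_tIdx (d e : Fin n × Fin n) : uIdx e ≠ tIdx d := (tIdx_ne_uIdx d e).symm

lemma lt_iff_eq_oIdx {w : Fin (expDim n)} : (w : ℕ) < n ↔ w = oIdx (base w) := by
  rcases idx_cases w with ⟨b, rfl⟩ | ⟨e, rfl⟩ | ⟨e, rfl⟩ <;> simp

end Layout

section Expansion

variable {n : ℕ} (f : St n → St n)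
  (χ₁ χ₂ : (m : ℕ) → (Fin (m + 1) → Fin n) → Fin n × Fin n)

def chosenChords : Set (Fin n × Fin n) :=
  {p | ∃ (m : ℕ) (v : Fin (m + 1) → Fin n), IsNegGCycle f v ∧ χ₁ m v = p}

def PairedChord (e : Fin n × Fin n) (k : Fin n) : Prop :=
  ∃ (m : ℕ) (v : Fin (m + 1) → Fin n),
    IsNegGCycle f v ∧ χ₁ m v = (e.1, k) ∧ χ₂ m v = e

inductive IsInput : Fin (expDim n) → Fin (expDim n) → Prop
  | chosen {l b : Fin n} : gEdge f l b → (l, b) ∈ chosenChords f χ₁ →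
      IsInput (oIdx l) (oIdx b)
  | delayed {l b : Fin n} : gEdge f l b → (l, b) ∉ chosenChords f χ₁ →
      IsInput (uIdx (l, b)) (oIdx b)
  | paired {e : Fin n × Fin n} {b : Fin n} : PairedChord f χ₁ χ₂ e b →
      IsInput (tIdx e) (oIdx b)
  | copy (e : Fin n × Fin n) : IsInput (oIdx e.1) (tIdx e)
  | andFst (e : Fin n × Fin n) : IsInput (oIdx e.1) (uIdx e)
  | andSnd (e : Fin n × Fin n) : IsInput (tIdx e) (uIdx e)

open Classical in
noncomputable def inputs (w : Fin (expDim n)) : Finset (Fin (expDim n)) :=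
  univ.filter (IsInput f χ₁ χ₂ · w)

def polarity (w : Fin (expDim n)) : ZMod 2 := if (w : ℕ) < n then 1 else 0

noncomputable def expansion : St (expDim n) → St (expDim n) :=
  andNetOf (inputs f χ₁ χ₂) polarity

variable {f χ₁ χ₂} {y : St (expDim n)} {z w : Fin (expDim n)}

@[simp] lemma mem_inputs : z ∈ inputs f χ₁ χ₂ w ↔ IsInput f χ₁ χ₂ z w := by
  simp [inputs]

lemma PairedChord.mem_chosenChords {e : Fin n × Fin n} {k : Fin n}
    (h : PairedChord f χ₁ χ₂ e k) : (e.1, k) ∈ chosenChords f χ₁ :=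
  let ⟨m, v, hv, h₁, _⟩ := h
  ⟨m, v, hv, h₁⟩

lemma gEdge_of_mem_chosenChords (hQ : QuasiDeloc f χ₁ χ₂) {l b : Fin n}
    (h : (l, b) ∈ chosenChords f χ₁) : gEdge f l b := by
  obtain ⟨m, v, hv, hχ⟩ := h
  simpa [hχ] using (hQ.1 m v hv).1.1

lemma isInput_tIdx_iff {e : Fin n × Fin n} :
    IsInput f χ₁ χ₂ z (tIdx e) ↔ z = oIdx e.1 := by
  refine ⟨fun h => ?_, fun h => h ▸ .copy e⟩
  generalize hw : tIdx e = w at h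
  cases h <;> simp_all

lemma isInput_uIdx_iff {e : Fin n × Fin n} :
    IsInput f χ₁ χ₂ z (uIdx e) ↔ z = oIdx e.1 ∨ z = tIdx e := by
  refine ⟨fun h => ?_, ?_⟩
  · generalize hw : uIdx e = w at h
    cases h <;> simp_all
  · rintro (rfl | rfl)
    exacts [.andFst e, .andSnd e]

lemma IsInput.base_eq (h : IsInput f χ₁ χ₂ z w) (hw : n ≤ (w : ℕ)) : base z = base w := by
  cases h with
  | copy e | andFst e | andSnd e => simp
  | _ => exact absurd hw (by simp)

lemma IsInput.lt (h : IsInput f χ₁ χ₂ z w) (hw : n ≤ (w : ℕ)) : z < w := by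
  cases h with
  | copy e => exact oIdx_lt_tIdx _ _
  | andFst e => exact oIdx_lt_uIdx _ _
  | andSnd e => exact tIdx_lt_uIdx _ _
  | _ => exact absurd hw (by simp)

lemma IsInput.gEdge_base (hQ : QuasiDeloc f χ₁ χ₂) {b : Fin n}
    (h : IsInput f χ₁ χ₂ z (oIdx b)) : gEdge f (base z) b := by
  generalize hw : oIdx b = w at h
  cases h with
  | paired hp => simp_all [gEdge_of_mem_chosenChords hQ hp.mem_chosenChords]
  | _ => simp_all

lemma IsInput.eq_uIdx {b : Fin n} (h : IsInput f χ₁ χ₂ z (oIdx b))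
    (hK : (base z, b) ∉ chosenChords f χ₁) : z = uIdx (base z, b) := by
  generalize hw : oIdx b = w at h
  cases h with
  | paired hp => simp_all [hp.mem_chosenChords]
  | _ => simp_all

lemma isTriangularFrom_expansion : IsTriangularFrom n (expansion f χ₁ χ₂) := by
  intro w hw x x' h
  unfold expansion andNetOf
  exact prod_congr rfl fun j hj => by rw [h j ((mem_inputs.1 hj).lt hw)]

lemma expansion_comp_base (x : St n) (w : Fin (expDim n)) :
    expansion f χ₁ χ₂ (x ∘ base) w =
      ∏ l ∈ (inputs f χ₁ χ₂ w).image base, (x l + polarity w) :=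
  prod_comp_of_isIdempotentElem (s := inputs f χ₁ χ₂ w) (fun l => x l + polarity w) base
    fun _ => ZMod.two_isIdempotentElem _

lemma image_base_inputs_of_le (hw : n ≤ (w : ℕ)) :
    (inputs f χ₁ χ₂ w).image base = {base w} := by
  refine eq_singleton_iff_unique_mem.2 ⟨mem_image.2 ⟨oIdx (base w), ?_, base_oIdx _⟩, ?_⟩
  · rcases idx_cases w with ⟨b, rfl⟩ | ⟨e, rfl⟩ | ⟨e, rfl⟩
    · exact absurd hw (by simp)
    · simp [isInput_tIdx_iff]
    · simp [isInput_uIdx_iff]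
  · simp only [mem_image, mem_inputs]
    rintro _ ⟨z, hz, rfl⟩
    exact hz.base_eq hw

lemma image_base_inputs_oIdx (hQ : QuasiDeloc f χ₁ χ₂) (b : Fin n) :
    (inputs f χ₁ χ₂ (oIdx b)).image base = inNeighbors f b := by
  ext l
  simp only [mem_image, mem_inputs, inNeighbors, mem_filter, mem_univ, true_and]
  refine ⟨fun ⟨z, hz, hl⟩ => hl ▸ hz.gEdge_base hQ, fun hl => ?_⟩
  by_cases hK : (l, b) ∈ chosenChords f χ₁
  · exact ⟨oIdx l, .chosen hl hK, base_oIdx l⟩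
  · exact ⟨uIdx (l, b), .delayed hl hK, base_uIdx _⟩

lemma peel_expansion (hf : IsNegAndNet f) (hQ : QuasiDeloc f χ₁ χ₂) :
    peel n _ (expansion f χ₁ χ₂) = f := by
  funext x b
  have hcast : ∀ i : Fin n, Fin.castLE (Nat.le_add_right n (n * n + n * n)) i = oIdx i :=
    fun _ => rfl
  rw [peel_apply (fun x => x ∘ base) isTriangularFrom_expansion (fun x i => by simp [hcast])
      (fun x w hw => by simp [expansion_comp_base, image_base_inputs_of_le hw, polarity,
        not_lt.2 hw]) x b,
    hcast, expansion_comp_base, image_base_inputs_oIdx hQ,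
    congrFun (congrFun hf.eq_andNetOf x) b]
  simp [polarity, andNetOf]

lemma expandsTo_expansion (hf : IsNegAndNet f) (hQ : QuasiDeloc f χ₁ χ₂) :
    ExpandsTo f (expansion f χ₁ χ₂) := by
  have h := expandsTo_peel (expansion f χ₁ χ₂) isTriangularFrom_expansion
  rwa [peel_expansion hf hQ] at h

lemma hasEdge_expansion_iff :
    hasEdge (expansion f χ₁ χ₂) y z w ↔
      IsInput f χ₁ χ₂ z w ∧
        ∀ j, IsInput f χ₁ χ₂ j w → j ≠ z → y j + polarity w = 1 := by
  simp [expansion, hasEdge_andNetOf_iff]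

lemma edgeNeg_expansion_iff (h : hasEdge (expansion f χ₁ χ₂) y z w) :
    edgeNeg (expansion f χ₁ χ₂) y z w ↔ (w : ℕ) < n := by
  rw [expansion, edgeNeg_andNetOf_iff h, polarity]
  split_ifs <;> simp_all

lemma base_eq_of_hasEdge (h : hasEdge (expansion f χ₁ χ₂) y z w) (hw : n ≤ (w : ℕ)) :
    base z = base w :=
  (hasEdge_expansion_iff.1 h).1.base_eq hw

lemma eq_oIdx_of_hasEdge_tIdx {e : Fin n × Fin n}
    (h : hasEdge (expansion f χ₁ χ₂) y z (tIdx e)) : z = oIdx e.1 :=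
  isInput_tIdx_iff.1 (hasEdge_expansion_iff.1 h).1

lemma hasEdge_uIdx {e : Fin n × Fin n} (h : hasEdge (expansion f χ₁ χ₂) y z (uIdx e)) :
    (z = oIdx e.1 ∧ y (tIdx e) = 1) ∨ (z = tIdx e ∧ y (oIdx e.1) = 1) := by
  obtain ⟨hz, hother⟩ := hasEdge_expansion_iff.1 h
  have hpol : polarity (uIdx e) = 0 := by simp [polarity]
  rcases isInput_uIdx_iff.1 hz with rfl | rfl
  · simpa [hpol] using hother (tIdx e) (.andSnd e) (by simp)
  · simpa [hpol] using hother (oIdx e.1) (.andFst e) (by simp)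

lemma eq_of_hasEdge_oIdx {b : Fin n} {j : Fin (expDim n)}
    (h : hasEdge (expansion f χ₁ χ₂) y z (oIdx b)) (hj : IsInput f χ₁ χ₂ j (oIdx b))
    (hy : y j = 1) : z = j := by
  by_contra hne
  have h11 := (hasEdge_expansion_iff.1 h).2 j hj (Ne.symm hne)
  simp [polarity, hy] at h11

end Expansion

section NoLocalNegativeCycle

open Fin.CommRing

variable {n : ℕ} {f : St n → St n}
  {χ₁ χ₂ : (m : ℕ) → (Fin (m + 1) → Fin n) → Fin n × Fin n}
  {y : St (expDim n)} {M : ℕ} {v : Fin (M + 1) → Fin (expDim n)}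

lemma hasEdge_pred (hE : ∀ k, hasEdge (expansion f χ₁ χ₂) y (v k) (v (k + 1)))
    (k : Fin (M + 1)) : hasEdge (expansion f χ₁ χ₂) y (v (k - 1)) (v k) := by
  simpa using hE (k - 1)

lemma isInput_pred_nextPos (hE : ∀ k, hasEdge (expansion f χ₁ χ₂) y (v k) (v (k + 1)))
    {a : Fin (M + 1)} (ha : (v a : ℕ) < n) :
    IsInput f χ₁ χ₂ (v (nextPos (fun k => (v k : ℕ) < n) a - 1))
        (oIdx (base (v (nextPos (fun k => (v k : ℕ) < n) a)))) ∧
      base (v (nextPos (fun k => (v k : ℕ) < n) a - 1)) = base (v a) := by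
  obtain ⟨g, hg, hnext, -, hmin⟩ := nextPos_spec (P := fun k => (v k : ℕ) < n) ha a
  have hc := hasEdge_pred hE (nextPos (fun k => (v k : ℕ) < n) a)
  rw [lt_iff_eq_oIdx.1 (nextPos_mem (P := fun k => (v k : ℕ) < n) ha a)] at hc
  refine ⟨(hasEdge_expansion_iff.1 hc).1, ?_⟩
  have hbase : ∀ r < g, base (v (a + r)) = base (v a) := by
    intro r
    induction r with
    | zero => simp
    | succ r ih =>
      intro hr
      have hvr : a + ((r + 1 : ℕ) : Fin (M + 1)) = a + r + 1 := by push_cast; ring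
      rw [← ih (by omega), hvr]
      exact (base_eq_of_hasEdge (hE _) (not_lt.1 (hvr ▸ hmin (r + 1) r.succ_pos hr))).symm
  rw [hnext, ← hbase (g - 1) (by omega)]
  congr 2
  rw [Nat.cast_sub (show 1 ≤ g from hg), Nat.cast_one]
  ring

lemma false_of_delayed_edge_of_chord
    (hE : ∀ k, hasEdge (expansion f χ₁ χ₂) y (v k) (v (k + 1)))
    (hinj : Function.Injective v) {a b c : Fin (M + 1)} {i j k : Fin n}
    (ha : v a = oIdx i) (hc : v (c - 1) = uIdx (i, j)) (hb : v b = oIdx k)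
    (hik : IsInput f χ₁ χ₂ (oIdx i) (oIdx k))
    (hijk : IsInput f χ₁ χ₂ (tIdx (i, j)) (oIdx k)) :
    False := by
  have hEc := hasEdge_pred hE (c - 1)
  have hEb := hasEdge_pred hE b
  rw [hc] at hEc
  rw [hb] at hEb
  rcases hasEdge_uIdx hEc with ⟨hc₂, hy⟩ | ⟨hc₂, hy⟩
  · have hca : c - 1 - 1 = a := hinj (hc₂.trans ha.symm)
    have hb₁ : v (b - 1) = tIdx (i, j) := eq_of_hasEdge_oIdx hEb hijk hy
    have hEb₁ := hasEdge_pred hE (b - 1)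
    rw [hb₁] at hEb₁
    have hba : b - 1 - 1 = a := hinj ((eq_oIdx_of_hasEdge_tIdx hEb₁).trans ha.symm)
    have hu : v (a + 1) = uIdx (i, j) := by rw [← hca, sub_add_cancel, hc]
    have ht : v (a + 1) = tIdx (i, j) := by rw [← hba, sub_add_cancel, hb₁]
    exact tIdx_ne_uIdx _ _ (ht.symm.trans hu)
  · have hEc₂ := hasEdge_pred hE (c - 1 - 1)
    rw [hc₂] at hEc₂
    have hca : c - 1 - 1 - 1 = a := hinj ((eq_oIdx_of_hasEdge_tIdx hEc₂).trans ha.symm)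
    have hb₁ : v (b - 1) = oIdx i := eq_of_hasEdge_oIdx hEb hik hy
    have hba : b - 1 = a := hinj (hb₁.trans ha.symm)
    have ht : v (a + 1) = tIdx (i, j) := by rw [← hca, sub_add_cancel, hc₂]
    have ho : v (a + 1) = oIdx k := by rw [← hba, sub_add_cancel, hb]
    exact oIdx_ne_tIdx _ _ (ho.symm.trans ht)

lemma odd_card_orig_of_hasNegCycle
    (hE : ∀ k, hasEdge (expansion f χ₁ χ₂) y (v k) (v (k + 1)))
    (hodd : Odd (Nat.card {k // edgeNeg (expansion f χ₁ χ₂) y (v k) (v (k + 1))})) :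
    Odd (Nat.card {k // (v k : ℕ) < n}) := by
  rwa [← Nat.card_congr ((Equiv.subtypeEquivRight fun k => edgeNeg_expansion_iff (hE k)).trans
    (Equiv.subtypeEquiv (Equiv.addRight 1) fun _ => Iff.rfl))]

theorem not_hasNegCycleAt_expansion (hf : IsNegAndNet f) (hQ : QuasiDeloc f χ₁ χ₂)
    (y : St (expDim n)) : ¬ hasNegCycleAt (expansion f χ₁ χ₂) y := by
  rintro ⟨M, v, hinj, hE, hodd⟩
  have hodd' := odd_card_orig_of_hasNegCycle hE hodd
  obtain ⟨⟨a₀, ha₀⟩⟩ := (Nat.card_pos_iff.1 hodd'.pos).1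
  obtain ⟨m, ψ, hψ⟩ := exists_equiv_nextPos (P := fun k => (v k : ℕ) < n) ha₀
  set w : Fin (m + 1) → Fin n := fun r => base (v (ψ r))
  have hvψ : ∀ r, v (ψ r) = oIdx (w r) := fun r => lt_iff_eq_oIdx.1 (ψ r).2
  have hseg : ∀ r, IsInput f χ₁ χ₂ (v (ψ (r + 1) - 1)) (oIdx (w (r + 1))) ∧
      base (v (ψ (r + 1) - 1)) = w r := fun r => by
    have h := isInput_pred_nextPos hE (ψ r).2
    rw [← hψ] at h
    exact h
  have hedge : ∀ r, gEdge f (w r) (w (r + 1)) := fun r =>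
    (hseg r).2 ▸ (hseg r).1.gEdge_base hQ
  have hneg : IsNegGCycle f w := by
    refine ⟨⟨fun r₁ r₂ h => ψ.injective (Subtype.ext (hinj ?_)), hedge⟩, ?_⟩
    · rw [hvψ, hvψ, h]
    · rw [Nat.card_congr (Equiv.subtypeUnivEquiv fun r => hf.gEdgeNeg (hedge r)),
        Nat.card_congr ψ]
      exact hodd'
  obtain ⟨⟨hchord, -, ⟨R, hR⟩, -⟩, ⟨r, hr₁, hr₂⟩, hsame⟩ := hQ.1 m w hneg
  have hχ₂ : χ₂ m w = ((χ₁ m w).1, (χ₂ m w).2) := Prod.ext hsame.symm rfl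
  have hnot : ((χ₁ m w).1, (χ₂ m w).2) ∉ chosenChords f χ₁ :=
    fun ⟨m', v', hv', h'⟩ => hQ.2 m' v' m w hv' hneg (h'.trans hχ₂.symm)
  have hwr : w r = (χ₁ m w).1 := hr₁.trans hsame.symm
  have hdelayed := (hseg r).1.eq_uIdx (by rwa [(hseg r).2, hwr, hr₂])
  rw [(hseg r).2, hwr, hr₂] at hdelayed
  exact false_of_delayed_edge_of_chord hE hinj ((hvψ r).trans (congrArg oIdx hwr)) hdelayed
    ((hvψ R).trans (congrArg oIdx hR)) (.chosen hchord ⟨m, w, hneg, rfl⟩)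
    (.paired ⟨m, w, hneg, rfl, hχ₂⟩)

end NoLocalNegativeCycle

/-- If a negative and-net `f` admits an `S`-quasi-delocalizing function, where `S` is the
set of negative cycles of `G(f)`, then `f` can be expanded (by a finite sequence of
one-step expansions) to an and-net `g` with no local negative cycle. -/
theorem stmt_4 (n : ℕ) (f : St n → St n) (hf : IsNegAndNet f)
    (hχ : ∃ χ₁ χ₂ : (m : ℕ) → (Fin (m + 1) → Fin n) → Fin n × Fin n, QuasiDeloc f χ₁ χ₂) :
    ∃ (m : ℕ) (g : St m → St m), ExpandsTo f g ∧ IsAndNet g ∧ ∀ y, ¬ hasNegCycleAt g y := by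
  obtain ⟨χ₁, χ₂, hQ⟩ := hχ
  exact ⟨expDim n, expansion f χ₁ χ₂, expandsTo_expansion hf hQ, isAndNet_andNetOf,
    not_hasNegCycleAt_expansion hf hQ⟩
end

section
/- Let f : F_2^n → F_2^n be a Boolean network with ∂_n f_n(x) = 0 for all x, and let f' : F_2^{n-1} → F_2^{n-1} be its reduction over coordinate n. Then for every x ∈ F_2^{n-1}, x is a fixed point of f' if and only if x' = (x, f_n(x,0)) is a fixed point of f; moreover x ↦ x' is a bijection between the fixed points of f' and the fixed points of f. -/
/-- For `x ∈ F_2^n`, the point `x' = (x, f_n(x,0)) ∈ F_2^{n+1}`. -/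
def extn {n : ℕ} (f : St (n + 1) → St (n + 1)) (x : St n) : St (n + 1) :=
  Fin.snoc x (f (Fin.snoc x 0) (Fin.last n))

lemma key_aux {n : ℕ} (f : St (n + 1) → St (n + 1))
    (hloop : ∀ x : St (n + 1), f (x + uv (Fin.last n)) (Fin.last n) = f x (Fin.last n))
    (y : St (n + 1)) : f y (Fin.last n) = f (Fin.snoc (Fin.init y) 0) (Fin.last n) := by
  have hy : y = Fin.snoc (Fin.init y) (y (Fin.last n)) := (Fin.snoc_init_self y).symm
  rcases (by decide : ∀ b : ZMod 2, b = 0 ∨ b = 1) (y (Fin.last n)) with h | h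
  · rw [← h, ← hy]
  · have : y = Fin.snoc (Fin.init y) 0 + uv (Fin.last n) := by
      funext j
      induction j using Fin.lastCases with
      | last => simp [uv, Fin.snoc, h]
      | cast i => simp [uv, Pi.add_apply, Fin.snoc_castSucc, Fin.init,
          (Fin.castSucc_lt_last i).ne]
    conv_lhs => rw [this, hloop]

/-- Fixed points are preserved by reduction/expansion: if `G(f)` has no loop on the last
coordinate and `f'` is the reduction of `f` over that coordinate, then `x` is a fixed
point of `f'` iff `x'` is a fixed point of `f`, and `x ↦ x'` is a bijection between the
fixed points of `f'` and those of `f`. -/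
theorem stmt_5 (n : ℕ) (f : St (n + 1) → St (n + 1)) (f' : St n → St n)
    (hloop : ∀ x : St (n + 1), f (x + uv (Fin.last n)) (Fin.last n) = f x (Fin.last n))
    (hf' : ∀ (x : St n) (i : Fin n), f' x i = f (extn f x) i.castSucc) :
    (∀ x : St n, f' x = x ↔ f (extn f x) = extn f x) ∧
    Set.BijOn (extn f) {x | f' x = x} {y | f y = y} := by
  have key := key_aux f hloop
  have hiff : ∀ x : St n, f' x = x ↔ f (extn f x) = extn f x := by
    intro x
    constructor
    · intro h
      funext j
      induction j using Fin.lastCases with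
      | last =>
        have : Fin.init (extn f x) = x := by simp [extn]
        rw [key (extn f x), this]
        simp [extn]
      | cast i =>
        rw [← hf' x i, h]
        simp [extn]
    · intro h
      funext i
      rw [hf' x i, h]
      simp [extn]
  refine ⟨hiff, ?_, ?_, ?_⟩
  · intro x hx; exact (hiff x).mp hx
  · intro x _ y _ hxy
    have : Fin.init (extn f x) = Fin.init (extn f y) := by rw [hxy]
    simpa [extn] using this
  · intro y hy
    refine ⟨Fin.init y, ?_, ?_⟩
    · have hey : extn f (Fin.init y) = y := by
        unfold extn
        rw [← key y, show f y (Fin.last n) = y (Fin.last n) from congrFun hy _,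
          Fin.snoc_init_self]
      simp only [Set.mem_setOf_eq]
      exact (hiff (Fin.init y)).mpr (by rw [hey]; exact hy)
    · unfold extn
      rw [← key y, show f y (Fin.last n) = y (Fin.last n) from congrFun hy _,
        Fin.snoc_init_self]
end

section
/- Let f : F_2^n → F_2^n be a Boolean network with ∂_n f_n(x) = 0 for all x, let f' : F_2^{n-1} → F_2^{n-1} be its reduction over coordinate n, and let π : F_2^n → F_2^{n-1} be the projection onto the first n-1 coordinates. If θ is an attractive cycle of f, then the image of θ under π, after removing consecutive repetitions of points, is an attractive cycle of f'. -/
/-- The nonempty list `L` enumerates an attractive cycle of `f`: pairwise distinct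
points, each point has Hamming distance `1` to its image, and `f` maps each point to the
(cyclically) next one. -/
def IsAttrCycleList {n : ℕ} (f : St n → St n) (L : List (St n)) : Prop :=
  L ≠ [] ∧ L.Nodup ∧
  ∀ (k : ℕ) (hk : k < L.length),
    hammingDist (L.get ⟨k, hk⟩) (f (L.get ⟨k, hk⟩)) = 1 ∧
    f (L.get ⟨k, hk⟩) =
      L.get ⟨(k + 1) % L.length, Nat.mod_lt _ (Nat.lt_of_le_of_lt (Nat.zero_le k) hk)⟩

/-- Remove consecutive repetitions from a list, viewed cyclically: first remove
consecutive duplicates, then remove the last element if it equals the first. -/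
def cycDedup {α : Type*} [DecidableEq α] (L : List α) : List α :=
  let M := L.destutter (· ≠ ·)
  if M.getLast? = M.head? ∧ 1 < M.length then M.dropLast else M

/-!
Along an attractive cycle every step flips a single coordinate. A step that flips coordinate
`n` leaves the projection `π` unchanged; since `∂_n f_n = 0`, the next step keeps `x_n`. At a
point `x` with `f_n(x) = x_n` the value `x_n = f_n(π x, 0)` is determined by `π x`, so `π` is
injective on such points, `(π x, f_n(π x, 0)) = x`, and hence `f'(π x) = π(f x)` is an attractive
step of `f'`. Removing repetitions from the projected cycle therefore leaves exactly the
projections of the points that do not flip `n`, in cyclic order, and they form an attractive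
cycle of `f'`.
-/

namespace List

variable {α β : Type*}

theorem isChain_append_take_one_iff {R : α → α → Prop} {L : List α} :
    (L ++ L.take 1).IsChain R ↔
      ∀ (k : ℕ) (hk : k < L.length), R L[k] (L[(k + 1) % L.length]'(Nat.mod_lt _ (by omega))) := by
  rcases L with _ | ⟨a, l⟩
  · simp
  have hrot : (a :: l).rotate 1 = l ++ [a] := by simp
  simp only [take_one, head?_cons, Option.toList_some, isChain_cons_append_singleton_iff_forall₂,
    ← hrot, forall₂_iff_get, length_rotate, get_eq_getElem, getElem_rotate, true_and]
  exact ⟨fun h k hk => h k hk hk, fun h k hk _ => h k hk⟩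

theorem head?_destutter' (R : α → α → Prop) [DecidableRel R] (a : α) (l : List α) :
    (l.destutter' R a).head? = some a := by
  induction l generalizing a with
  | nil => rfl
  | cons b l ih => rw [destutter'_cons]; split_ifs <;> simp [ih]

theorem head?_destutter (R : α → α → Prop) [DecidableRel R] (l : List α) :
    (l.destutter R).head? = l.head? := by
  cases l with
  | nil => rfl
  | cons a l => rw [destutter_cons', head?_destutter']; rfl

theorem destutter_map_append_singleton [DecidableEq β] (π : α → β) (p : α → Prop)
    [DecidablePred p] : ∀ {l : List α} {z : α},
    (l ++ [z]).IsChain (fun x y => p x ↔ π x ≠ π y) →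
      ((l ++ [z]).map π).destutter (· ≠ ·) = (l.filter p).map π ++ [π z]
  | [], _, _ => rfl
  | x :: l, z, h => by
    have ih := destutter_map_append_singleton π p h.tail
    obtain ⟨y, t, hyt⟩ := exists_cons_of_ne_nil (by simp : l ++ [z] ≠ [])
    rw [cons_append, hyt, isChain_cons_cons] at h
    rw [hyt, map_cons, destutter_cons'] at ih
    rw [cons_append, hyt, map_cons, map_cons, destutter_cons_cons]
    by_cases hx : p x
    · simp [hx, h.1.mp hx, ih]
    · have hxy : π x = π y := by simpa [hx] using h.1
      simp [hx, hxy, ih]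

variable [DecidableEq α]

theorem isChain_destutter'_of_isChain_eq_or {R : α → α → Prop} {a : α} {l : List α}
    (h : (a :: l).IsChain fun x y => x = y ∨ R x y) :
    (l.destutter' (· ≠ ·) a).IsChain R := by
  induction l generalizing a with
  | nil => simp
  | cons b l ih =>
    obtain ⟨hab, hl⟩ := isChain_cons_cons.mp h
    rw [destutter'_cons]
    split_ifs with hne
    · exact isChain_cons.mpr
        ⟨by simpa [head?_destutter'] using hab.resolve_left hne, ih hl⟩
    · rw [not_not] at hne
      subst hne
      exact ih hl

theorem isChain_destutter_of_isChain_eq_or {R : α → α → Prop} {l : List α}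
    (h : l.IsChain fun x y => x = y ∨ R x y) : (l.destutter (· ≠ ·)).IsChain R := by
  cases l with
  | nil => simp
  | cons a l => exact isChain_destutter'_of_isChain_eq_or h

end List

theorem hammingDist_eq_hammingDist_init_add {n : ℕ} {β : Type*} [DecidableEq β]
    (x y : Fin (n + 1) → β) :
    hammingDist x y =
      hammingDist (Fin.init x) (Fin.init y) + if x (Fin.last n) = y (Fin.last n) then 0 else 1 := by
  rw [hammingDist, Finset.card_filter, Fin.sum_univ_castSucc, ← Finset.card_filter, ite_not]
  rfl

theorem ZMod.two_eq_add_one_of_ne {a b : ZMod 2} (h : a ≠ b) : b = a + 1 := by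
  revert a b; decide

namespace BooleanNetwork

variable {n : ℕ}

/-- An edge `x → f x` of `Γ(f)` along an attractive cycle. -/
def AttrStep (f : St n → St n) (x y : St n) : Prop :=
  hammingDist x (f x) = 1 ∧ f x = y

theorem isAttrCycleList_iff {f : St n → St n} {L : List (St n)} :
    IsAttrCycleList f L ↔ L ≠ [] ∧ L.Nodup ∧ (L ++ L.take 1).IsChain (AttrStep f) := by
  simp only [IsAttrCycleList, List.isChain_append_take_one_iff, AttrStep, List.get_eq_getElem]

theorem eq_add_uv_last_of_init_eq {x y : St (n + 1)} (h : Fin.init x = Fin.init y)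
    (hlast : x (Fin.last n) ≠ y (Fin.last n)) : y = x + uv (Fin.last n) := by
  funext i
  induction i using Fin.lastCases with
  | last => simpa [uv] using ZMod.two_eq_add_one_of_ne hlast
  | cast i => simpa [uv, (Fin.castSucc_lt_last i).ne, Fin.init] using (congrFun h i).symm

section Reduction

variable (f : St (n + 1) → St (n + 1))

abbrev FixesLast (x : St (n + 1)) : Prop := f x (Fin.last n) = x (Fin.last n)

variable {f}
variable (hloop : ∀ x : St (n + 1), f (x + uv (Fin.last n)) (Fin.last n) = f x (Fin.last n))
include hloop

theorem apply_last_eq_of_init_eq {x y : St (n + 1)} (h : Fin.init x = Fin.init y) :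
    f x (Fin.last n) = f y (Fin.last n) := by
  by_cases hlast : x (Fin.last n) = y (Fin.last n)
  · rw [← Fin.snoc_init_self x, ← Fin.snoc_init_self y, h, hlast]
  · rw [eq_add_uv_last_of_init_eq h hlast, hloop]

theorem injOn_init_fixesLast : Set.InjOn Fin.init {x | FixesLast f x} := by
  intro x hx y hy h
  rw [← Fin.snoc_init_self x, ← Fin.snoc_init_self y, h]
  congr 1
  exact hx.symm.trans ((apply_last_eq_of_init_eq hloop h).trans hy)

omit hloop in
theorem hammingDist_init_of_attrStep {x y : St (n + 1)} (h : AttrStep f x y)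
    (hx : FixesLast f x) : hammingDist (Fin.init x) (Fin.init y) = 1 := by
  obtain ⟨hd, rfl⟩ := h
  simpa [hammingDist_eq_hammingDist_init_add x, hx] using hd

omit hloop in
theorem init_eq_of_attrStep {x y : St (n + 1)} (h : AttrStep f x y) (hx : ¬FixesLast f x) :
    Fin.init x = Fin.init y := by
  obtain ⟨hd, rfl⟩ := h
  have : x (Fin.last n) ≠ f x (Fin.last n) := Ne.symm hx
  simpa [hammingDist_eq_hammingDist_init_add x, this] using hd

omit hloop in
theorem fixesLast_iff_init_ne_of_attrStep {x y : St (n + 1)} (h : AttrStep f x y) :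
    FixesLast f x ↔ Fin.init x ≠ Fin.init y := by
  refine ⟨fun hx => ?_, fun hne => by_contra fun hx => hne (init_eq_of_attrStep h hx)⟩
  rw [← hammingDist_ne_zero, hammingDist_init_of_attrStep h hx]
  exact one_ne_zero

theorem fixesLast_of_attrStep {x y : St (n + 1)} (h : AttrStep f x y) (hx : ¬FixesLast f x) :
    FixesLast f y := by
  have hinit := init_eq_of_attrStep h hx
  obtain ⟨-, rfl⟩ := h
  exact (apply_last_eq_of_init_eq hloop hinit).symm

theorem cycDedup_map_init {L : List (St (n + 1))} (hL : IsAttrCycleList f L) :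
    cycDedup (L.map Fin.init) = (L.filter (FixesLast f)).map Fin.init := by
  obtain ⟨hne, -, hchain⟩ := isAttrCycleList_iff.mp hL
  obtain ⟨l, z, rfl⟩ := (List.eq_nil_or_concat' L).resolve_left hne
  obtain ⟨x₀, hx₀⟩ := Option.isSome_iff_exists.mp (by simp : ((l ++ [z]).head?).isSome)
  rw [List.take_one, hx₀, Option.toList_some, List.isChain_append] at hchain
  obtain ⟨hchain, -, hwrap⟩ := hchain
  have hzx₀ : AttrStep f z x₀ := hwrap z List.getLast?_concat x₀ rfl
  have hM := List.destutter_map_append_singleton Fin.init (FixesLast f)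
    (hchain.imp fun _ _ h => fixesLast_iff_init_ne_of_attrStep h)
  have hhead := List.head?_destutter (· ≠ ·) ((l ++ [z]).map Fin.init)
  rw [hM, List.head?_map, hx₀, Option.map_some] at hhead
  simp only [cycDedup, hM, List.getLast?_concat, hhead, Option.some.injEq, List.length_append,
    List.length_singleton, lt_add_iff_pos_left, List.length_pos_iff]
  -- `cycDedup` drops the final `π z` exactly when `z` flips coordinate `n`, i.e. `π z = π x₀`.
  by_cases hz : FixesLast f z
  · rw [if_neg fun h => (fixesLast_iff_init_ne_of_attrStep hzx₀).mp hz h.1]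
    simp [List.filter_append, decide_eq_true hz]
  · have hx₀l : x₀ ∈ l := by
      have hx₀z : x₀ ≠ z := fun h => hz (h ▸ fixesLast_of_attrStep hloop hzx₀ hz)
      simpa [hx₀z] using List.mem_of_mem_head? hx₀
    rw [if_pos ⟨init_eq_of_attrStep hzx₀ hz, List.ne_nil_of_mem (List.mem_map_of_mem
      (List.mem_filter.mpr ⟨hx₀l, decide_eq_true (fixesLast_of_attrStep hloop hzx₀ hz)⟩))⟩]
    simp [List.filter_append, decide_eq_false hz]

variable {f' : St n → St n} (hf' : ∀ (x : St n) (i : Fin n), f' x i = f (extn f x) i.castSucc)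
include hf'

theorem reduction_apply_init {x : St (n + 1)} (hx : FixesLast f x) :
    f' (Fin.init x) = Fin.init (f x) := by
  have hext : extn f (Fin.init x) = x := by
    rw [extn, apply_last_eq_of_init_eq hloop (Fin.init_snoc _ _), hx, Fin.snoc_init_self]
  funext i
  rw [hf', hext]
  rfl

theorem attrStep_init {x y : St (n + 1)} (h : AttrStep f x y) (hx : FixesLast f x) :
    AttrStep f' (Fin.init x) (Fin.init y) := by
  rw [AttrStep, reduction_apply_init hloop hf' hx, h.2]
  exact ⟨hammingDist_init_of_attrStep h hx, rfl⟩

theorem isAttrCycleList_filter_map_init {L : List (St (n + 1))} (hL : IsAttrCycleList f L) :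
    IsAttrCycleList f' ((L.filter (FixesLast f)).map Fin.init) := by
  obtain ⟨hne, hnd, hchain⟩ := isAttrCycleList_iff.mp hL
  obtain ⟨x₀, t, rfl⟩ := List.exists_cons_of_ne_nil hne
  rw [List.take_one, List.head?_cons, Option.toList_some] at hchain
  set K := ((x₀ :: t).filter (FixesLast f)).map Fin.init
  have hK : K ++ [Fin.init x₀] = ((x₀ :: t ++ [x₀]).map Fin.init).destutter (· ≠ ·) :=
    (List.destutter_map_append_singleton _ _
      (hchain.imp fun _ _ h => fixesLast_iff_init_ne_of_attrStep h)).symm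
  have hKne : K ≠ [] := by
    suffices ∃ x ∈ x₀ :: t, FixesLast f x by
      obtain ⟨x, hx, hfx⟩ := this
      exact fun h => List.filter_eq_nil_iff.mp (List.map_eq_nil_iff.mp h) x hx (decide_eq_true hfx)
    by_cases hx₀ : FixesLast f x₀
    · exact ⟨x₀, List.mem_cons_self, hx₀⟩
    obtain ⟨y, hy⟩ := Option.isSome_iff_exists.mp (by simp : ((t ++ [x₀]).head?).isSome)
    have hx₀y : AttrStep f x₀ y := (List.cons_append ▸ hchain).rel_head? hy
    refine ⟨y, ?_, fixesLast_of_attrStep hloop hx₀y hx₀⟩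
    have := List.mem_of_mem_head? hy
    simp only [List.mem_append, List.mem_singleton] at this
    exact this.elim (List.mem_cons_of_mem _) (· ▸ List.mem_cons_self)
  have htake : K.take 1 = [Fin.init x₀] := by
    have h := List.head?_destutter (· ≠ ·) ((x₀ :: t ++ [x₀]).map Fin.init)
    rw [← hK, List.head?_append_of_ne_nil _ hKne] at h
    rw [List.take_one, h]
    rfl
  refine isAttrCycleList_iff.mpr ⟨hKne, (hnd.filter _).map_on fun x hx y hy =>
    injOn_init_fixesLast hloop (of_decide_eq_true (List.mem_filter.mp hx).2)
      (of_decide_eq_true (List.mem_filter.mp hy).2), ?_⟩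
  rw [htake, hK]
  refine List.isChain_destutter_of_isChain_eq_or ((List.isChain_map _).mpr (hchain.imp ?_))
  intro x y h
  by_cases hx : FixesLast f x
  · exact Or.inr (attrStep_init hloop hf' h hx)
  · exact Or.inl (init_eq_of_attrStep h hx)

end Reduction

end BooleanNetwork

/-- Attractive cycles are preserved by reduction: if `G(f)` has no loop on the last
coordinate, `f'` is the reduction of `f` over that coordinate, and `θ` is an attractive
cycle of `f`, then the image of `θ` under the projection `π` on the first `n`
coordinates, after removing consecutive repetitions, is an attractive cycle of `f'`. -/
theorem stmt_6 (n : ℕ) (f : St (n + 1) → St (n + 1)) (f' : St n → St n)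
    (hloop : ∀ x : St (n + 1), f (x + uv (Fin.last n)) (Fin.last n) = f x (Fin.last n))
    (hf' : ∀ (x : St n) (i : Fin n), f' x i = f (extn f x) i.castSucc)
    (L : List (St (n + 1))) (hL : IsAttrCycleList f L) :
    IsAttrCycleList f' (cycDedup (L.map Fin.init)) := by
  rw [BooleanNetwork.cycDedup_map_init hloop hL]
  exact BooleanNetwork.isAttrCycleList_filter_map_init hloop hf' hL
end

section
/- Let k ≥ 4, n ≥ k+2, and let f : F_2^n → F_2^n be a Boolean network such that f(e^{{1,…,i-1}}) = e^{{1,…,i}} for every i ∈ {1,…,k} (where e^{{1,…,0}} = 0). If f has no local negative cycle, then for every i ∈ {1,…,k-2}, writing a = e^{{1,…,i-1}}, the asynchronous dynamics Γ(f) contains the five edges (a, a+e^i), (a+e^i, a+e^{{i,i+1}}), (a+e^{{i,i+1}}, a+e^{{i,i+1,i+2}}), (a+e^{i+1}, a+e^{{i,i+1}}), (a+e^{{i,i+2}}, a+e^{{i,i+1,i+2}}), and moreover contains either the edge (a+e^{{i+1,i+2}}, a+e^{{i,i+1,i+2}}), or all three edges (a+e^{i+1}, a+e^{{i+1,i+2}}),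 (a+e^{i+2}, a+e^{{i+1,i+2}}), (a+e^{i+2}, a+e^{{i,i+2}}). -/
/-- The asynchronous dynamics `Γ(f)` has an edge from `u` to `u + e^c`. -/
def gamEdge {n : ℕ} (f : St n → St n) (u : St n) (c : Fin n) : Prop := f u c ≠ u c

/-- `e^{{1,…,j}}`: the state whose first `j` coordinates are `1`. -/
def eFirst (n j : ℕ) : St n := fun t => if (t : ℕ) < j then 1 else 0

lemma negCyc2 {n : ℕ} (f : St n → St n) (x : St n) (j l : Fin n) (hjl : j ≠ l)
    (e1 : f (x + uv j) l ≠ f x l) (hp : x j = f x l)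
    (e2 : f (x + uv l) j ≠ f x j) (hn : x l ≠ f x j) :
    hasNegCycleAt f x := by
  have h01 : (0 : Fin 2) + 1 = 1 := by decide
  have h10 : (1 : Fin 2) + 1 = 0 := by decide
  refine ⟨1, ![j, l], ?_, ?_, ?_⟩
  · intro p q h
    fin_cases p <;> fin_cases q <;> simp_all
  · intro k
    fin_cases k
    · simpa [hasEdge, h01] using e1
    · simpa [hasEdge, h10] using e2
  · have key : ∀ k : Fin 2, edgeNeg f x (![j,l] k) (![j,l] (k+1)) → k = 1 := by
      intro k hk
      fin_cases k
      · have hk' : x j ≠ f x l := by simpa using hk.2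
        exact absurd hp hk'
      · rfl
    have hmem : edgeNeg f x (![j,l] 1) (![j,l] (1+1)) := by
      rw [h10]
      exact ⟨by simpa [hasEdge] using e2, by simpa using hn⟩
    have hcard : Nat.card {k : Fin 2 // edgeNeg f x (![j,l] k) (![j,l] (k+1))} = 1 := by
      rw [Nat.card_eq_one_iff_unique]
      exact ⟨⟨fun a b => Subtype.ext (by rw [key _ a.2, key _ b.2])⟩, ⟨⟨1, hmem⟩⟩⟩
    rw [hcard]
    exact odd_one

lemma negCyc3 {n : ℕ} (f : St n → St n) (x : St n) (j l m : Fin n)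
    (hjl : j ≠ l) (hjm : j ≠ m) (hlm : l ≠ m)
    (e1 : f (x + uv j) l ≠ f x l) (hp1 : x j = f x l)
    (e2 : f (x + uv l) m ≠ f x m) (hp2 : x l = f x m)
    (e3 : f (x + uv m) j ≠ f x j) (hn : x m ≠ f x j) :
    hasNegCycleAt f x := by
  have h01 : (0 : Fin 3) + 1 = 1 := by decide
  have h12 : (1 : Fin 3) + 1 = 2 := by decide
  have h20 : (2 : Fin 3) + 1 = 0 := by decide
  refine ⟨2, ![j, l, m], ?_, ?_, ?_⟩
  · intro p q h
    fin_cases p <;> fin_cases q <;> simp_all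
  · intro k
    fin_cases k
    · simpa [hasEdge, h01] using e1
    · simpa [hasEdge, h12] using e2
    · simpa [hasEdge, h20] using e3
  · have key : ∀ k : Fin 3, edgeNeg f x (![j,l,m] k) (![j,l,m] (k+1)) → k = 2 := by
      intro k hk
      fin_cases k
      · have hk' : x j ≠ f x l := by simpa using hk.2
        exact absurd hp1 hk'
      · have hk' : x l ≠ f x m := by simpa using hk.2
        exact absurd hp2 hk'
      · rfl
    have hmem : edgeNeg f x (![j,l,m] 2) (![j,l,m] (2+1)) := by
      rw [h20]
      exact ⟨by simpa [hasEdge] using e3, by simpa using hn⟩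
    have hcard : Nat.card {k : Fin 3 // edgeNeg f x (![j,l,m] k) (![j,l,m] (k+1))} = 1 := by
      rw [Nat.card_eq_one_iff_unique]
      exact ⟨⟨fun a b => Subtype.ext (by rw [key _ a.2, key _ b.2])⟩, ⟨⟨2, hmem⟩⟩⟩
    rw [hcard]
    exact odd_one

lemma zmod2_cases (v : ZMod 2) : v = 0 ∨ v = 1 := by revert v; decide

/-- Lemma on padding around a trajectory: if `f(e^{1..i-1}) = e^{1..i}` for `1 ≤ i ≤ k`
(with `4 ≤ k`, `k + 2 ≤ n`) and `f` has no local negative cycle, then for each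
`1 ≤ i ≤ k - 2`, writing `a = e^{1..i-1}`, `Γ(f)` contains the five edges
`(a, a+e^i)`, `(a+e^i, a+e^{i,i+1})`, `(a+e^{i,i+1}, a+e^{i,i+1,i+2})`,
`(a+e^{i+1}, a+e^{i,i+1})`, `(a+e^{i,i+2}, a+e^{i,i+1,i+2})`, and moreover contains
either the edge `(a+e^{i+1,i+2}, a+e^{i,i+1,i+2})`, or the three edges
`(a+e^{i+1}, a+e^{i+1,i+2})`, `(a+e^{i+2}, a+e^{i+1,i+2})`, `(a+e^{i+2}, a+e^{i,i+2})`.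
(Coordinates are `1`-indexed in this informal description; below, the `1`-indexed
coordinate `i` is the `Fin n` element with value `i - 1`.) -/
theorem stmt_7 (n k : ℕ) (hk : 4 ≤ k) (hn : k + 2 ≤ n) (f : St n → St n)
    (htraj : ∀ j, j < k → f (eFirst n j) = eFirst n (j + 1))
    (hnoneg : ∀ x, ¬ hasNegCycleAt f x) :
    ∀ (i : ℕ), 1 ≤ i → i ≤ k - 2 →
      ∀ (c0 c1 c2 : Fin n), (c0 : ℕ) = i - 1 → (c1 : ℕ) = i → (c2 : ℕ) = i + 1 →
      gamEdge f (eFirst n (i - 1)) c0 ∧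
      gamEdge f (eFirst n (i - 1) + uv c0) c1 ∧
      gamEdge f (eFirst n (i - 1) + uv c0 + uv c1) c2 ∧
      gamEdge f (eFirst n (i - 1) + uv c1) c0 ∧
      gamEdge f (eFirst n (i - 1) + uv c0 + uv c2) c1 ∧
      (gamEdge f (eFirst n (i - 1) + uv c1 + uv c2) c0 ∨
        (gamEdge f (eFirst n (i - 1) + uv c1) c2 ∧
         gamEdge f (eFirst n (i - 1) + uv c2) c1 ∧
         gamEdge f (eFirst n (i - 1) + uv c2) c0)) := by
  intro i hi1 hi2 c0 c1 c2 hc0 hc1 hc2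
  set a : St n := eFirst n (i - 1) with ha_def
  -- distinctness of the three coordinates
  have hne01 : c0 ≠ c1 := by intro h; rw [Fin.ext_iff, hc0, hc1] at h; omega
  have hne02 : c0 ≠ c2 := by intro h; rw [Fin.ext_iff, hc0, hc2] at h; omega
  have hne12 : c1 ≠ c2 := by intro h; rw [Fin.ext_iff, hc1, hc2] at h; omega
  have hne10 : c1 ≠ c0 := hne01.symm
  have hne20 : c2 ≠ c0 := hne02.symm
  have hne21 : c2 ≠ c1 := hne12.symm
  -- coordinate values of `a`
  have ha0 : a c0 = 0 := by simp only [ha_def, eFirst, hc0]; rw [if_neg (by omega)]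
  have ha1 : a c1 = 0 := by simp only [ha_def, eFirst, hc1]; rw [if_neg (by omega)]
  have ha2 : a c2 = 0 := by simp only [ha_def, eFirst, hc2]; rw [if_neg (by omega)]
  -- uv evaluations
  have hu00 : uv c0 c0 = 1 := if_pos rfl
  have hu11 : uv c1 c1 = 1 := if_pos rfl
  have hu22 : uv c2 c2 = 1 := if_pos rfl
  have hu01 : uv c0 c1 = 0 := if_neg hne10
  have hu02 : uv c0 c2 = 0 := if_neg hne20
  have hu10 : uv c1 c0 = 0 := if_neg hne01
  have hu12 : uv c1 c2 = 0 := if_neg hne21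
  have hu20 : uv c2 c0 = 0 := if_neg hne02
  have hu21 : uv c2 c1 = 0 := if_neg hne12
  -- state identifications
  have hA : a + uv c0 = eFirst n i := by
    funext t
    show a t + uv c0 t = _
    rcases eq_or_ne t c0 with h | h
    · subst h
      rw [ha0, hu00, zero_add, eFirst, if_pos (by omega)]
    · have hv : (t : ℕ) ≠ i - 1 := by
        intro hh; exact h (Fin.val_injective (by rw [hc0]; exact hh))
      have hiff : ((t : ℕ) < i - 1) ↔ ((t : ℕ) < i) := by omega
      rw [uv, if_neg h, add_zero, ha_def, eFirst, eFirst]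
      simp only [hiff]
  have hB : a + uv c0 + uv c1 = eFirst n (i + 1) := by
    funext t
    show a t + uv c0 t + uv c1 t = _
    rcases eq_or_ne t c0 with h | h
    · subst h
      rw [ha0, hu00, hu10, zero_add, add_zero, eFirst, if_pos (by omega)]
    · rcases eq_or_ne t c1 with h' | h'
      · subst h'
        rw [ha1, hu01, hu11, zero_add, zero_add, eFirst, if_pos (by omega)]
      · have hv : (t : ℕ) ≠ i - 1 := by
          intro hh; exact h (Fin.val_injective (by rw [hc0]; exact hh))
        have hv' : (t : ℕ) ≠ i := by
          intro hh; exact h' (Fin.val_injective (by rw [hc1]; exact hh))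
        have hiff : ((t : ℕ) < i - 1) ↔ ((t : ℕ) < i + 1) := by omega
        rw [uv, if_neg h, uv, if_neg h', add_zero, add_zero, ha_def, eFirst, eFirst]
        simp only [hiff]
  -- values of f on the trajectory
  have hf0 : f a = eFirst n i := by
    have := htraj (i - 1) (by omega)
    rw [ha_def]
    convert this using 2
    omega
  have hf1 : f (a + uv c0) = eFirst n (i + 1) := by rw [hA]; exact htraj i (by omega)
  have hf2 : f (a + uv c0 + uv c1) = eFirst n (i + 2) := by
    rw [hB]; exact htraj (i + 1) (by omega)
  -- coordinates of f-values on the trajectory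
  have v00 : f a c0 = 1 := by rw [hf0, eFirst, hc0, if_pos (by omega)]
  have v01 : f a c1 = 0 := by rw [hf0, eFirst, hc1, if_neg (by omega)]
  have v02 : f a c2 = 0 := by rw [hf0, eFirst, hc2, if_neg (by omega)]
  have v11 : f (a + uv c0) c1 = 1 := by rw [hf1, eFirst, hc1, if_pos (by omega)]
  have v12 : f (a + uv c0) c2 = 0 := by rw [hf1, eFirst, hc2, if_neg (by omega)]
  have v22 : f (a + uv c0 + uv c1) c2 = 1 := by rw [hf2, eFirst, hc2, if_pos (by omega)]
  -- coordinate values of cube points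
  have p10_1 : (a + uv c0) c1 = 0 := by show a c1 + uv c0 c1 = 0; rw [ha1, hu01, add_zero]
  have p10_2 : (a + uv c0) c2 = 0 := by show a c2 + uv c0 c2 = 0; rw [ha2, hu02, add_zero]
  have p01_0 : (a + uv c1) c0 = 0 := by show a c0 + uv c1 c0 = 0; rw [ha0, hu10, add_zero]
  have p01_2 : (a + uv c1) c2 = 0 := by show a c2 + uv c1 c2 = 0; rw [ha2, hu12, add_zero]
  have p001_0 : (a + uv c2) c0 = 0 := by show a c0 + uv c2 c0 = 0; rw [ha0, hu20, add_zero]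
  have p001_1 : (a + uv c2) c1 = 0 := by show a c1 + uv c2 c1 = 0; rw [ha1, hu21, add_zero]
  have p110_2 : (a + uv c0 + uv c1) c2 = 0 := by
    show a c2 + uv c0 c2 + uv c1 c2 = 0; rw [ha2, hu02, hu12, add_zero, add_zero]
  have p101_1 : (a + uv c0 + uv c2) c1 = 0 := by
    show a c1 + uv c0 c1 + uv c2 c1 = 0; rw [ha1, hu01, hu21, add_zero, add_zero]
  have p011_0 : (a + uv c1 + uv c2) c0 = 0 := by
    show a c0 + uv c1 c0 + uv c2 c0 = 0; rw [ha0, hu10, hu20, add_zero, add_zero]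
  -- commutation equalities
  have q1 : a + uv c1 + uv c0 = a + uv c0 + uv c1 := by rw [add_right_comm]
  have q2 : a + uv c2 + uv c0 = a + uv c0 + uv c2 := by rw [add_right_comm]
  have q3 : a + uv c2 + uv c1 = a + uv c1 + uv c2 := by rw [add_right_comm]
  -- Fact F1 : f (a + uv c1) c0 = 1     (edge 4)
  have F1 : f (a + uv c1) c0 = 1 := by
    rcases zmod2_cases (f (a + uv c1) c0) with h | h
    · exfalso
      apply hnoneg a
      exact negCyc2 f a c0 c1 hne01
        (by rw [v11, v01]; exact one_ne_zero)
        (by rw [ha0, v01])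
        (by rw [h, v00]; exact zero_ne_one)
        (by rw [ha1, v00]; exact zero_ne_one)
    · exact h
  -- Fact F2 : f (a + uv c0 + uv c2) c1 = 1     (edge 5)
  have F2 : f (a + uv c0 + uv c2) c1 = 1 := by
    rcases zmod2_cases (f (a + uv c0 + uv c2) c1) with h | h
    · exfalso
      apply hnoneg (a + uv c0)
      exact negCyc2 f (a + uv c0) c1 c2 hne12
        (by rw [v22, v12]; exact one_ne_zero)
        (by rw [p10_1, v12])
        (by rw [h, v11]; exact zero_ne_one)
        (by rw [p10_2, v11]; exact zero_ne_one)
    · exact h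
  -- part 6: case analysis
  have F6 : f (a + uv c1 + uv c2) c0 = 1 ∨
      (f (a + uv c1) c2 = 1 ∧ f (a + uv c2) c1 = 1 ∧ f (a + uv c2) c0 = 1) := by
    rcases zmod2_cases (f (a + uv c1 + uv c2) c0) with h6 | h6
    · right
      -- F3 : f (a + uv c1) c2 = 1
      have F3 : f (a + uv c1) c2 = 1 := by
        rcases zmod2_cases (f (a + uv c1) c2) with h | h
        · exfalso
          apply hnoneg (a + uv c1)
          exact negCyc2 f (a + uv c1) c0 c2 hne02
            (by rw [q1, v22, h]; exact one_ne_zero)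
            (by rw [p01_0, h])
            (by rw [h6, F1]; exact zero_ne_one)
            (by rw [p01_2, F1]; exact zero_ne_one)
        · exact h
      -- F4 : f (a + uv c2) c0 = 1
      have F4 : f (a + uv c2) c0 = 1 := by
        rcases zmod2_cases (f (a + uv c2) c0) with h | h
        · exfalso
          apply hnoneg a
          exact negCyc3 f a c0 c1 c2 hne01 hne02 hne12
            (by rw [v11, v01]; exact one_ne_zero)
            (by rw [ha0, v01])
            (by rw [F3, v02]; exact one_ne_zero)
            (by rw [ha1, v02])
            (by rw [h, v00]; exact zero_ne_one)
            (by rw [ha2, v00]; exact zero_ne_one)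
        · exact h
      -- F5 : f (a + uv c2) c1 = 1
      have F5 : f (a + uv c2) c1 = 1 := by
        rcases zmod2_cases (f (a + uv c2) c1) with h | h
        · exfalso
          apply hnoneg (a + uv c2)
          exact negCyc2 f (a + uv c2) c0 c1 hne01
            (by rw [q2, F2, h]; exact one_ne_zero)
            (by rw [p001_0, h])
            (by rw [q3, h6, F4]; exact zero_ne_one)
            (by rw [p001_1, F4]; exact zero_ne_one)
        · exact h
      exact ⟨F3, F5, F4⟩
    · left; exact h6
  -- assemble
  refine ⟨?_, ?_, ?_, ?_, ?_, ?_⟩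
  · show f a c0 ≠ a c0
    rw [v00, ha0]; exact one_ne_zero
  · show f (a + uv c0) c1 ≠ (a + uv c0) c1
    rw [v11, p10_1]; exact one_ne_zero
  · show f (a + uv c0 + uv c1) c2 ≠ (a + uv c0 + uv c1) c2
    rw [v22, p110_2]; exact one_ne_zero
  · show f (a + uv c1) c0 ≠ (a + uv c1) c0
    rw [F1, p01_0]; exact one_ne_zero
  · show f (a + uv c0 + uv c2) c1 ≠ (a + uv c0 + uv c2) c1
    rw [F2, p101_1]; exact one_ne_zero
  · rcases F6 with h | ⟨h3, h5, h4⟩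
    · left
      show f (a + uv c1 + uv c2) c0 ≠ (a + uv c1 + uv c2) c0
      rw [h, p011_0]; exact one_ne_zero
    · right
      refine ⟨?_, ?_, ?_⟩
      · show f (a + uv c1) c2 ≠ (a + uv c1) c2
        rw [h3, p01_2]; exact one_ne_zero
      · show f (a + uv c2) c1 ≠ (a + uv c2) c1
        rw [h5, p001_1]; exact one_ne_zero
      · show f (a + uv c2) c0 ≠ (a + uv c2) c0
        rw [h4, p001_0]; exact one_ne_zero
end

section
/- Let f : F_2^n → F_2^n be a Boolean network, x ∈ F_2^n, and let C be a cycle of the local interaction graph G(f)(x) with vertex set J ⊆ {1,…,n}. Then C is positive if and only if the number of vertices j ∈ J with f_j(x) ≠ x_j is even, and C is negative if and only if that number is odd. In particular, if x is a fixed point of f, then G(f)(x) has no negative cycle. -/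
private lemma ind_eq (a b : ZMod 2) : (if a ≠ b then (1:ZMod 2) else 0) = a + b := by
  revert a b; decide

open Finset in
private lemma key {n : ℕ} (f : St n → St n) (x : St n) (m : ℕ) (v : Fin (m + 1) → Fin n)
    (hinj : Function.Injective v) (hedges : ∀ k, hasEdge f x (v k) (v (k + 1))) :
    Nat.card {k : Fin (m + 1) // edgeNeg f x (v k) (v (k + 1))} ≡
      Nat.card {j : Fin n // (∃ k, v k = j) ∧ f x j ≠ x j} [MOD 2] := by
  classical
  have h1 : Nat.card {k : Fin (m + 1) // edgeNeg f x (v k) (v (k + 1))}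
      = (univ.filter (fun k : Fin (m+1) => x (v k) ≠ f x (v (k+1)))).card := by
    rw [Nat.card_eq_fintype_card, Fintype.card_subtype]
    congr 1
    apply filter_congr
    intro k _
    simp only [edgeNeg, eq_iff_iff]
    exact ⟨fun h => h.2, fun h => ⟨hedges k, h⟩⟩
  have e : {k : Fin (m+1) // f x (v k) ≠ x (v k)} ≃
      {j : Fin n // (∃ k, v k = j) ∧ f x j ≠ x j} := by
    refine Equiv.ofBijective (fun k => ⟨v k.1, ⟨k.1, rfl⟩, k.2⟩) ⟨?_, ?_⟩
    · intro a b h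
      exact Subtype.ext (hinj (congrArg Subtype.val h))
    · rintro ⟨j, ⟨k, rfl⟩, hj⟩
      exact ⟨⟨k, hj⟩, rfl⟩
  have h2 : Nat.card {j : Fin n // (∃ k, v k = j) ∧ f x j ≠ x j}
      = (univ.filter (fun k : Fin (m+1) => f x (v k) ≠ x (v k))).card := by
    rw [← Nat.card_congr e, Nat.card_eq_fintype_card, Fintype.card_subtype]
  rw [h1, h2]
  apply (ZMod.natCast_eq_natCast_iff _ _ _).mp
  rw [← Finset.sum_boole, ← Finset.sum_boole]
  calc (∑ k : Fin (m+1), if x (v k) ≠ f x (v (k+1)) then (1:ZMod 2) else 0)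
      = ∑ k : Fin (m+1), (x (v k) + f x (v (k+1))) := by
        exact Finset.sum_congr rfl (fun k _ => ind_eq _ _)
    _ = (∑ k : Fin (m+1), x (v k)) + ∑ k : Fin (m+1), f x (v (k+1)) := by
        rw [Finset.sum_add_distrib]
    _ = (∑ k : Fin (m+1), x (v k)) + ∑ k : Fin (m+1), f x (v k) := by
        congr 1
        exact Fintype.sum_equiv (Equiv.addRight 1) _ _ (fun k => rfl)
    _ = ∑ k : Fin (m+1), (f x (v k) + x (v k)) := by
        rw [← Finset.sum_add_distrib]
        exact Finset.sum_congr rfl (fun k _ => add_comm _ _)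
    _ = ∑ k : Fin (m+1), if f x (v k) ≠ x (v k) then (1:ZMod 2) else 0 := by
        exact Finset.sum_congr rfl (fun k _ => (ind_eq _ _).symm)

/-- Sign-parity lemma: for a cycle `C` of `G(f)(x)` (given by an injective `v` whose
consecutive pairs are edges of `G(f)(x)`) with vertex set `J = range v`, `C` is positive
(even number of negative edges) iff the number of vertices `j ∈ J` with `f_j(x) ≠ x_j`
is even, and `C` is negative iff that number is odd. In particular, at any fixed point
of `f` the local interaction graph has no negative cycle. -/
theorem stmt_8 (n : ℕ) (f : St n → St n) (x : St n) (m : ℕ) (v : Fin (m + 1) → Fin n)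
    (hinj : Function.Injective v) (hedges : ∀ k, hasEdge f x (v k) (v (k + 1))) :
    ((Even (Nat.card {k : Fin (m + 1) // edgeNeg f x (v k) (v (k + 1))}) ↔
        Even (Nat.card {j : Fin n // (∃ k, v k = j) ∧ f x j ≠ x j})) ∧
      (Odd (Nat.card {k : Fin (m + 1) // edgeNeg f x (v k) (v (k + 1))}) ↔
        Odd (Nat.card {j : Fin n // (∃ k, v k = j) ∧ f x j ≠ x j}))) ∧
    (∀ y : St n, f y = y → ¬ hasNegCycleAt f y) := by
  have hm := (key f x m v hinj hedges)
  refine ⟨⟨?_, ?_⟩, ?_⟩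
  · rw [Nat.even_iff, Nat.even_iff, hm]
  · rw [Nat.odd_iff, Nat.odd_iff, hm]
  · rintro y hy ⟨m', v', hinj', hedges', hodd⟩
    have hm' := key f y m' v' hinj' hedges'
    have hE : IsEmpty {j : Fin n // (∃ k, v' k = j) ∧ f y j ≠ y j} :=
      ⟨fun ⟨j, _, hj⟩ => hj (congrFun hy j)⟩
    rw [@Nat.card_of_isEmpty _ hE] at hm'
    rw [Nat.odd_iff, hm'] at hodd
    simp at hodd
end

section
/- Fix n ≥ 7 and let f : F_2^n → F_2^n be the Boolean network defined by f(a^i) = a^{i+1}, f(b^i) = a^{i+3}, f(c^i) = a^{i+3}, f(d^i) = a^{i+4} + e^{i+1} for all i, and f(x) = x for every x not of the form a^i, b^i, c^i or d^i. Let T : F_2^n → F_2^n be defined by T(x) = S(x) + e^1, where S is the cyclic shift S(x) = (x_n, x_1, …, x_{n-1}). Then f is T-equivariant: f ∘ T = T ∘ f. -/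
/-- `e^i` for an integer index `i` (`1`-indexed, taken modulo `n`): `e^{i+n} = e^i`. -/
def eZ (n : ℕ) (i : ℤ) : St n := fun t => if ((t : ℕ) : ℤ) = (i - 1) % (n : ℤ) then 1 else 0

/-- The `2n`-periodic sequence `a^i`: for `1 ≤ i ≤ n`, `a^i = e^{{1,…,i-1}}` and
`a^{n+i}` is the antipode of `a^i`. (Its `1`-indexed coordinate `j = t+1` is `1` iff
`(i - 1 - j) mod 2n < n`.) -/
def aZ (n : ℕ) (i : ℤ) : St n :=
  fun t => if (i - 2 - ((t : ℕ) : ℤ)) % (2 * (n : ℤ)) < (n : ℤ) then 1 else 0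

/-- `b^i = a^i + e^{i+1}`. -/
def bZ (n : ℕ) (i : ℤ) : St n := aZ n i + eZ n (i + 1)

/-- `c^i = a^i + e^{i+2}`. -/
def cZ (n : ℕ) (i : ℤ) : St n := aZ n i + eZ n (i + 2)

/-- `d^i = a^i + e^{i+2} + e^{i+3}`. -/
def dZ (n : ℕ) (i : ℤ) : St n := aZ n i + eZ n (i + 2) + eZ n (i + 3)

/-!
`T(x) = S(x) + e^1` sends `e^j` to `e^{j+1}` and `a^i` to `a^{i+1}`: away from coordinate `1`
this is the shift of indices, and at coordinate `1` the twist `e^1` compensates the wrap-around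
to the antipode, `a^{i+n} = a^i + 1`. Hence `T` shifts each of the families `a, b, c, d` by one
index, and the rules defining `f` are invariant under this shift. Since `T` is injective, it
also maps the states outside the four families to states outside them, where `f` is the
identity.
-/

open Function Set

theorem Function.commute_of_preimage_subset_of_isFixedPt {α : Type*} {f T : α → α} {s : Set α}
    (hs : T ⁻¹' s ⊆ s) (hf : ∀ x ∉ s, IsFixedPt f x) (hfT : ∀ x ∈ s, f (T x) = T (f x)) :
    Function.Commute f T := by
  intro x
  by_cases hx : x ∈ s
  · exact hfT x hx
  · rw [(hf x hx).eq, (hf (T x) fun h => hx (hs h)).eq]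

theorem Function.Injective.preimage_range_subset {α : Type*} {T : α → α} (hT : Injective T)
    {g : ℤ → α} (hg : ∀ i, T (g i) = g (i + 1)) : T ⁻¹' range g ⊆ range g := by
  rintro x ⟨i, hi⟩
  exact ⟨i - 1, hT (by rw [hg, sub_add_cancel, hi])⟩

theorem Int.add_emod_two_mul_lt_iff {n : ℤ} (hn : 0 < n) (k : ℤ) :
    (k + n) % (2 * n) < n ↔ ¬k % (2 * n) < n := by
  rw [← Int.emod_add_emod]
  have h0 : 0 ≤ k % (2 * n) := Int.emod_nonneg _ (by omega)
  have h1 : k % (2 * n) < 2 * n := Int.emod_lt_of_pos _ (by omega)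
  by_cases hk : k % (2 * n) < n
  · rw [Int.emod_eq_of_lt (by omega) (by omega)]
    omega
  · rw [show k % (2 * n) + n = k % (2 * n) - n + 2 * n by ring, ← Int.emod_eq_add_self_emod,
      Int.emod_eq_of_lt (by omega) (by omega)]
    omega

variable {n : ℕ}

theorem val_finRotate_symm (t : Fin n) :
    ((finRotate n).symm t : ℕ) = if (t : ℕ) = 0 then n - 1 else t - 1 := by
  obtain ⟨m, rfl⟩ := Nat.exists_eq_succ_of_ne_zero t.pos.ne'
  split_ifs with ht
  · rw [show t = 0 from Fin.ext ht, finRotate_symm_apply, zero_sub, Fin.coe_neg_one]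
    rfl
  · exact coe_finRotate_symm_of_ne_zero (Fin.ext_iff.not.mpr ht)

theorem val_finRotate_symm_eq_mod (t : Fin n) :
    ((finRotate n).symm t : ℕ) = ((t : ℕ) + n - 1) % n := by
  have := t.isLt
  rw [val_finRotate_symm]
  split_ifs with ht
  · rw [ht, zero_add, Nat.mod_eq_of_lt (by omega)]
  · rw [show (t : ℕ) + n - 1 = t - 1 + n by omega, Nat.add_mod_right,
      Nat.mod_eq_of_lt (by omega)]

theorem val_finRotate_symm_modEq (t : Fin n) :
    (((finRotate n).symm t : ℕ) : ℤ) ≡ t - 1 [ZMOD n] := by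
  rw [val_finRotate_symm]
  split_ifs with ht
  · exact Int.modEq_iff_dvd.mpr ⟨-1, by push_cast [ht, Nat.cast_sub t.pos]; ring⟩
  · rw [Nat.cast_sub (Nat.one_le_iff_ne_zero.mpr ht), Nat.cast_one]

theorem eZ_apply (i : ℤ) (t : Fin n) :
    eZ n i t = if (t : ℤ) ≡ i - 1 [ZMOD n] then 1 else 0 := by
  have ht : ((t : ℕ) : ℤ) % n = t :=
    Int.emod_eq_of_lt (by positivity) (by exact_mod_cast t.isLt)
  simp only [eZ, Int.ModEq, ht]

theorem eZ_one_apply (t : Fin n) : eZ n 1 t = if (t : ℕ) = 0 then 1 else 0 := by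
  simp [eZ]

theorem aZ_apply_congr {i j : ℤ} {s t : Fin n} (h : i - s = j - t) : aZ n i s = aZ n j t := by
  unfold aZ
  rw [show i - 2 - s = j - 2 - t by omega]

theorem aZ_add_self (hn : 0 < n) (i : ℤ) : aZ n (i + n) = aZ n i + 1 := by
  funext t
  simp only [aZ, Pi.add_apply, Pi.one_apply, show i + n - 2 - t = i - 2 - t + n by ring,
    Int.add_emod_two_mul_lt_iff (Int.natCast_pos.mpr hn)]
  split_ifs <;> decide

/-- The cyclic shift `S(x) = (x_n, x_1, …, x_{n-1})`. -/
def cycShift (x : St n) : St n := x ∘ (finRotate n).symm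

theorem cycShift_injective : Injective (cycShift (n := n)) :=
  (finRotate n).symm.surjective.injective_comp_right

theorem cycShift_add (x y : St n) : cycShift (x + y) = cycShift x + cycShift y := rfl

theorem cycShift_eZ (i : ℤ) : cycShift (eZ n i) = eZ n (i + 1) := by
  funext t
  have hσ := val_finRotate_symm_modEq t
  simp only [cycShift, comp_apply, eZ_apply, add_sub_cancel_right]
  refine if_congr ⟨fun h => ?_, fun h => hσ.trans (h.sub_right 1)⟩ rfl rfl
  simpa using (hσ.symm.trans h).add_right 1

def twistShift (x : St n) : St n := cycShift x + eZ n 1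

theorem twistShift_injective : Injective (twistShift (n := n)) :=
  fun _ _ h => cycShift_injective (add_right_cancel h)

theorem twistShift_add_eZ (x : St n) (j : ℤ) :
    twistShift (x + eZ n j) = twistShift x + eZ n (j + 1) := by
  simp only [twistShift, cycShift_add, cycShift_eZ]
  abel

theorem twistShift_aZ (i : ℤ) : twistShift (aZ n i) = aZ n (i + 1) := by
  funext t
  simp only [twistShift, cycShift, Pi.add_apply, comp_apply, eZ_one_apply]
  split_ifs with ht
  · have hσ : aZ n i ((finRotate n).symm t) = aZ n (i + 1 - n) t := aZ_apply_congr (by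
      rw [val_finRotate_symm, if_pos ht]; push_cast [ht, Nat.cast_sub t.pos]; ring)
    have hanti := congrFun (aZ_add_self t.pos (i + 1 - n)) t
    rw [sub_add_cancel] at hanti
    rw [hσ, hanti, Pi.add_apply, Pi.one_apply]
  · rw [add_zero]
    exact aZ_apply_congr (by
      rw [val_finRotate_symm, if_neg ht, Nat.cast_sub (Nat.one_le_iff_ne_zero.mpr ht)]
      push_cast
      ring)

theorem twistShift_bZ (i : ℤ) : twistShift (bZ n i) = bZ n (i + 1) := by
  rw [bZ, bZ, twistShift_add_eZ, twistShift_aZ]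

theorem twistShift_cZ (i : ℤ) : twistShift (cZ n i) = cZ n (i + 1) := by
  rw [cZ, cZ, twistShift_add_eZ, twistShift_aZ, add_right_comm]

theorem twistShift_dZ (i : ℤ) : twistShift (dZ n i) = dZ n (i + 1) := by
  rw [dZ, dZ, twistShift_add_eZ, twistShift_add_eZ, twistShift_aZ, add_right_comm i 2,
    add_right_comm i 3]

/-- The Boolean network `f` of the second construction (defined by `f(a^i) = a^{i+1}`,
`f(b^i) = f(c^i) = a^{i+3}`, `f(d^i) = a^{i+4} + e^{i+1}`, and `f(x) = x` elsewhere) is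
`T`-equivariant, where `T(x) = S(x) + e^1` and `S` is the cyclic shift
`S(x) = (x_n, x_1, …, x_{n-1})`. -/
theorem stmt_10 (n : ℕ) (hn : 7 ≤ n) (f : St n → St n)
    (hfa : ∀ i : ℤ, f (aZ n i) = aZ n (i + 1))
    (hfb : ∀ i : ℤ, f (bZ n i) = aZ n (i + 3))
    (hfc : ∀ i : ℤ, f (cZ n i) = aZ n (i + 3))
    (hfd : ∀ i : ℤ, f (dZ n i) = aZ n (i + 4) + eZ n (i + 1))
    (hfix : ∀ x : St n, (∀ i : ℤ, x ≠ aZ n i ∧ x ≠ bZ n i ∧ x ≠ cZ n i ∧ x ≠ dZ n i) →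
      f x = x)
    (T : St n → St n)
    (hT : ∀ (x : St n) (t : Fin n),
      T x t = x ⟨((t : ℕ) + n - 1) % n, Nat.mod_lt _ (by omega)⟩ +
        (if (t : ℕ) = 0 then 1 else 0)) :
    f ∘ T = T ∘ f := by
  obtain rfl : T = twistShift := funext fun x => funext fun t => by
    rw [hT, twistShift, Pi.add_apply, eZ_one_apply]
    congr 2
    exact Fin.ext (val_finRotate_symm_eq_mod t).symm
  have hinj : Injective (twistShift (n := n)) := twistShift_injective
  refine (Function.commute_of_preimage_subset_of_isFixedPt
    (s := range (aZ n) ∪ range (bZ n) ∪ range (cZ n) ∪ range (dZ n)) ?_ ?_ ?_).comp_eq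
  · simp only [preimage_union]
    exact union_subset_union (union_subset_union (union_subset_union
      (hinj.preimage_range_subset twistShift_aZ) (hinj.preimage_range_subset twistShift_bZ))
      (hinj.preimage_range_subset twistShift_cZ)) (hinj.preimage_range_subset twistShift_dZ)
  · intro x hx
    apply hfix
    simp only [mem_union, mem_range, not_or, not_exists] at hx
    exact fun i =>
      ⟨Ne.symm (hx.1.1.1 i), Ne.symm (hx.1.1.2 i), Ne.symm (hx.1.2 i), Ne.symm (hx.2 i)⟩
  · rintro x (((⟨i, rfl⟩ | ⟨i, rfl⟩) | ⟨i, rfl⟩) | ⟨i, rfl⟩)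
    · rw [twistShift_aZ, hfa, hfa, twistShift_aZ]
    · rw [twistShift_bZ, hfb, hfb, twistShift_aZ, add_right_comm]
    · rw [twistShift_cZ, hfc, hfc, twistShift_aZ, add_right_comm]
    · rw [twistShift_dZ, hfd, hfd, twistShift_add_eZ, twistShift_aZ, add_right_comm]
end

section
/- Let f : F_2^n → F_2^n be a non-expansive Boolean network, i.e., d(f(x), f(y)) ≤ d(x,y) for all x, y, where d is the Hamming distance. If f has a cyclic attractor, then G(f) has a local negative cycle, i.e., there exists x ∈ F_2^n such that the local interaction graph G(f)(x) contains a negative cycle. -/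
/-- Reachability in the asynchronous dynamics `Γ(f)`. -/
def Reach {n : ℕ} (f : St n → St n) : St n → St n → Prop :=
  Relation.ReflTransGen (fun x y => ∃ i, f x i ≠ x i ∧ y = x + uv i)

/-- `A` is a cyclic attractor of `f`: a nonempty terminal strongly connected component
of `Γ(f)` (nonempty, closed under the moves of `Γ(f)`, strongly connected) which is not
a singleton (equivalently, does not consist of a fixed point). -/
def IsCyclicAttractor {n : ℕ} (f : St n → St n) (A : Set (St n)) : Prop :=
  A.Nonempty ∧
  (∀ x ∈ A, ∀ i, f x i ≠ x i → x + uv i ∈ A) ∧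
  (∀ x ∈ A, ∀ y ∈ A, Reach f x y) ∧
  ¬ ∃ a, A = {a}

/-!
If some `G(f)(x)` has a negative loop we are done, so assume it has none. The attractor rules out
fixed points: a point of it nearest to a fixed point would itself be fixed. At a state minimizing
`d(x, f x)`, flipping an unstable coordinate moves `f x` in exactly one coordinate, which is stable;
so `d(x, f x)` stays minimal and `f x + x + e^p` stays constant. By finiteness this walk closes up
into a cycle `x t` flipping `p t` at step `t`, with `f (x t) = x t + e + e^(p t)` for a fixed `e`.
Then `g = f + e` is non-expansive with `g (x t) = x (t + 1)`, hence an isometry on the cycle.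
Comparing the columns `s ↦ x s q` one finds in turn that `p (t + 1)` depends only on `p t`, so that
`p t ↦ p (t + 1)` is a cyclic permutation `σ` of the flipped coordinates; that each of their columns
is balanced; and that `f (x 0 + e^q) = f (x 0) + e^(σ q)`. So the edges `q → σ q` of `G(f)(x 0)`
form a cycle, and its number of negative edges is odd because `p 0` is its only vertex unstable at
`x 0`.
-/

open Function

lemma ZMod.two_ne_iff_eq_add_one : ∀ {a b : ZMod 2}, a ≠ b ↔ a = b + 1 := by decide

lemma ZMod.two_ite_ne_eq_add : ∀ a b : ZMod 2, (if a ≠ b then 1 else 0 : ZMod 2) = a + b := by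
  decide

lemma ZMod.two_ne_iff_ne_iff : ∀ {a b c d : ZMod 2}, (a ≠ b ↔ c ≠ d) ↔ a + c = b + d := by
  decide

section Hamming

variable {n : ℕ}

@[simp] lemma uv_apply (i j : Fin n) : uv i j = if j = i then 1 else 0 := rfl

lemma add_uv_apply_of_ne (x : St n) {i j : Fin n} (h : j ≠ i) : (x + uv i) j = x j := by
  simp [h]

lemma St.add_self (x : St n) : x + x = 0 := funext fun j => CharTwo.add_self_eq_zero (x j)

lemma St.add_add_cancel_right (x y : St n) : x + y + y = x := by
  rw [add_assoc, St.add_self, add_zero]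

lemma hammingDist_add_uv_of_ne {x y : St n} {c : Fin n} (h : x c ≠ y c) :
    hammingDist (x + uv c) y + 1 = hammingDist x y := by
  have hfilter : Finset.univ.filter (fun i => (x + uv c) i ≠ y i) =
      (Finset.univ.filter fun i => x i ≠ y i).erase c := by
    ext j
    simp only [Finset.mem_erase, Finset.mem_filter, Finset.mem_univ, true_and]
    by_cases hj : j = c
    · subst hj
      simp [ZMod.two_ne_iff_eq_add_one.mp h, CharTwo.add_cancel_right]
    · simp [hj]
  rw [hammingDist, hammingDist, hfilter, Finset.card_erase_add_one (by simpa using h)]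

lemma hammingDist_add_uv_of_eq {x y : St n} {c : Fin n} (h : x c = y c) :
    hammingDist (x + uv c) y = hammingDist x y + 1 := by
  have hne : (x + uv c) c ≠ y c := by simp [← h]
  simpa [St.add_add_cancel_right] using (hammingDist_add_uv_of_ne hne).symm

lemma hammingDist_add_uv_self (x : St n) (c : Fin n) : hammingDist (x + uv c) x = 1 := by
  simp [hammingDist_add_uv_of_eq rfl]

lemma hammingDist_add_right (u v w : St n) : hammingDist (u + w) (v + w) = hammingDist u v := by
  rw [hammingDist_eq_hammingNorm, hammingDist_eq_hammingNorm]
  congr 1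
  abel

lemma hammingDist_self_add (y w : St n) : hammingDist y (y + w) = hammingDist 0 w := by
  simpa [add_comm] using hammingDist_add_right 0 w y

lemma eq_or_exists_eq_add_uv_of_hammingDist_le_one {u v : St n} (h : hammingDist u v ≤ 1) :
    v = u ∨ ∃ c, v = u + uv c := by
  by_cases huv : u = v
  · exact Or.inl huv.symm
  obtain ⟨c, hc⟩ := ne_iff.mp huv
  have := hammingDist_add_uv_of_ne hc
  exact Or.inr ⟨c, (hammingDist_eq_zero.mp (by omega)).symm⟩

end Hamming

def NonExpansive {n : ℕ} (f : St n → St n) : Prop :=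
  ∀ x y, hammingDist (f x) (f y) ≤ hammingDist x y

lemma NonExpansive.add_const {n : ℕ} {f : St n → St n} (hf : NonExpansive f) (w : St n) :
    NonExpansive (fun y => f y + w) := fun x y => by
  simpa only [hammingDist_add_right] using hf x y

lemma hammingDist_eq_add_of_agree {ι β : Type*} [Fintype ι] [DecidableEq β] {x y z : ι → β}
    (h : ∀ i, y i ≠ x i → z i = x i) :
    hammingDist z y = hammingDist z x + hammingDist x y := by
  classical
  have hunion : Finset.univ.filter (fun i => z i ≠ y i) =
      Finset.univ.filter (fun i => z i ≠ x i) ∪ Finset.univ.filter (fun i => x i ≠ y i) := by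
    ext i
    by_cases hi : y i = x i
    · simp [hi]
    · simp [h i hi, Ne.symm hi]
  have hdisj : Disjoint (Finset.univ.filter fun i => z i ≠ x i)
      (Finset.univ.filter fun i => x i ≠ y i) := by
    rw [Finset.disjoint_filter]
    exact fun i _ hzx hxy => hzx (h i (Ne.symm hxy))
  rw [hammingDist, hunion, Finset.card_union_of_disjoint hdisj]
  rfl

section Attractors

variable {n : ℕ} {f : St n → St n}

lemma Reach.eq_of_apply_eq {x y : St n} (hr : Reach f x y) (hx : f x = x) : y = x := by
  induction hr with
  | refl => rfl
  | tail _ hstep ih =>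
    obtain ⟨i, hi, -⟩ := hstep
    exact absurd (by rw [ih, hx]) hi

/-- The point of `A` nearest to `z` agrees with `z` wherever it is unstable, so it is fixed. -/
lemma exists_mem_apply_eq_of_trapSet (hf : NonExpansive f) {z : St n} (hz : f z = z)
    {A : Set (St n)} (hA : A.Nonempty)
    (hclosed : ∀ x ∈ A, ∀ i, f x i ≠ x i → x + uv i ∈ A) :
    ∃ x ∈ A, f x = x := by
  obtain ⟨x, hxA, hmin⟩ := A.toFinite.toFinset.exists_min_image (hammingDist z)
    (A.toFinite.toFinset_nonempty.mpr hA)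
  rw [Set.Finite.mem_toFinset] at hxA
  have hagree : ∀ i, f x i ≠ x i → z i = x i := by
    intro i hi
    by_contra hzi
    have hcloser := hammingDist_add_uv_of_ne (Ne.symm hzi)
    have := hmin _ (A.toFinite.mem_toFinset.mpr (hclosed x hxA i hi))
    rw [hammingDist_comm z x, hammingDist_comm z] at this
    omega
  have hle := hf z x
  rw [hz, hammingDist_eq_add_of_agree hagree] at hle
  exact ⟨x, hxA, (hammingDist_eq_zero.mp (by omega)).symm⟩

lemma IsCyclicAttractor.apply_ne_self {A : Set (St n)} (hA : IsCyclicAttractor f A)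
    (hf : NonExpansive f) (z : St n) : f z ≠ z := by
  obtain ⟨hne, hclosed, hconn, hns⟩ := hA
  intro hz
  obtain ⟨x, hxA, hx⟩ := exists_mem_apply_eq_of_trapSet hf hz hne hclosed
  exact hns ⟨x, Set.eq_singleton_iff_unique_mem.mpr
    ⟨hxA, fun y hyA => (hconn x hxA y hyA).eq_of_apply_eq hx⟩⟩

end Attractors

lemma apply_perm_eq_of_forall_le {α β : Type*} [Fintype α] [AddCommMonoid β] [PartialOrder β]
    [IsOrderedCancelAddMonoid β] (σ : Equiv.Perm α) {F : α → β} (h : ∀ a, F (σ a) ≤ F a)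
    (a : α) : F (σ a) = F a :=
  (Finset.sum_eq_sum_iff_of_le fun a _ => h a).mp (Equiv.sum_comp σ F) a (Finset.mem_univ a)

lemma card_filter_eq_iterate_eq_one {α : Type*} [DecidableEq α] {σ : α → α} {y q : α}
    (hy : y ∈ periodicPts σ) {k : ℕ} (hk : σ^[k] y = q) :
    ((Finset.range (minimalPeriod σ y)).filter fun j => q = σ^[j] y).card = 1 := by
  rw [Finset.card_eq_one]
  refine ⟨k % minimalPeriod σ y, Finset.ext fun j => ?_⟩
  have hmod : k % minimalPeriod σ y < minimalPeriod σ y :=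
    Nat.mod_lt _ (minimalPeriod_pos_of_mem_periodicPts hy)
  simp only [Finset.mem_filter, Finset.mem_range, Finset.mem_singleton]
  constructor
  · rintro ⟨hj, rfl⟩
    exact iterate_injOn_Iio_minimalPeriod hj hmod (by simp only [iterate_mod_minimalPeriod_eq, hk])
  · rintro rfl
    exact ⟨hmod, by rw [iterate_mod_minimalPeriod_eq, hk]⟩

lemma exists_zmod_cycle {α : Type*} [Finite α] [Nonempty α] {R : α → α → Prop}
    (hR : ∀ a, ∃ b, R a b) :
    ∃ (L : ℕ) (_ : NeZero L) (z : ZMod L → α), ∀ t, R (z t) (z (t + 1)) := by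
  choose s hs using hR
  obtain ⟨i, j, hij, heq⟩ :=
    Finite.exists_ne_map_eq_of_infinite fun k : ℕ => s^[k] (Classical.arbitrary α)
  wlog hlt : i < j generalizing i j
  · exact this j i hij.symm heq.symm (by omega)
  have hper : IsPeriodicPt s (j - i) (s^[i] (Classical.arbitrary α)) := by
    rw [IsPeriodicPt, IsFixedPt, ← iterate_add_apply, Nat.sub_add_cancel hlt.le, heq]
  have : NeZero (j - i) := ⟨by omega⟩
  refine ⟨j - i, inferInstance, fun t => s^[t.val] (s^[i] (Classical.arbitrary α)),
    fun t => ?_⟩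
  dsimp only
  rw [ZMod.val_add, ZMod.val_one_eq_one_mod, Nat.add_mod_mod, hper.iterate_mod_apply,
    iterate_succ_apply']
  exact hs _

section NegativeCycles

variable {n : ℕ} {f : St n → St n} {x : St n}

/-- An edge `j → i` of `G(f)(x)` is negative iff `x j + f x i = 1`, so `hsum` counts the negative
edges of the cycle mod 2. -/
lemma hasNegCycleAt_of_sum_eq_one {m : ℕ} {v : Fin (m + 1) → Fin n} (hv : Injective v)
    (hedge : ∀ k, hasEdge f x (v k) (v (k + 1)))
    (hsum : ∑ k, (x (v k) + f x (v (k + 1))) = 1) : hasNegCycleAt f x := by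
  classical
  refine ⟨m, v, hv, hedge, ?_⟩
  rw [← ZMod.natCast_eq_one_iff_odd, Nat.card_eq_fintype_card, Fintype.card_subtype,
    ← Finset.sum_boole]
  refine (Finset.sum_congr rfl fun k _ => ?_).trans hsum
  rw [← ZMod.two_ite_ne_eq_add]
  exact if_congr ⟨And.right, And.intro (hedge k)⟩ rfl rfl

lemma hasNegCycleAt_of_loop {i : Fin n} (h : hasEdge f x i i) (hneg : x i ≠ f x i) :
    hasNegCycleAt f x :=
  hasNegCycleAt_of_sum_eq_one (m := 0) (v := fun _ => i)
    (fun k l _ => Subsingleton.elim (α := Fin 1) k l) (fun _ => h)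
    (by simp [← ZMod.two_ite_ne_eq_add, hneg])

lemma hasNegCycleAt_of_mem_periodicPts {σ : Fin n → Fin n} {a : Fin n}
    (ha : a ∈ periodicPts σ)
    (hedge : ∀ k, hasEdge f x (σ^[k] a) (σ^[k + 1] a))
    (hfx : ∀ k, f x (σ^[k] a) = x (σ^[k] a) + if σ^[k] a = a then 1 else 0) :
    hasNegCycleAt f x := by
  obtain ⟨m, hm⟩ := Nat.exists_eq_succ_of_ne_zero (minimalPeriod_pos_of_mem_periodicPts ha).ne'
  set v : Fin (m + 1) → Fin n := fun k => σ^[k] a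
  have hv : Injective v := fun k l hkl =>
    Fin.ext (iterate_injOn_Iio_minimalPeriod (by rw [Set.mem_Iio, hm]; exact k.isLt)
      (by rw [Set.mem_Iio, hm]; exact l.isLt) hkl)
  have hv_succ : ∀ k : Fin (m + 1), v (k + 1) = σ^[k + 1] a := fun k => by
    simp only [v, Fin.val_add, Fin.val_one', Nat.add_mod_mod]
    have := iterate_mod_minimalPeriod_eq (f := σ) (x := a) (n := k + 1)
    rwa [hm] at this
  have hv_eq : ∀ k, v k = a ↔ k = 0 := fun k => by
    rw [← hv.eq_iff]
    rfl
  refine hasNegCycleAt_of_sum_eq_one hv (fun k => hv_succ k ▸ hedge k) ?_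
  have hshift : ∑ k : Fin (m + 1), (x (v (k + 1)) + if v (k + 1) = a then 1 else 0) =
      ∑ k, (x (v k) + if v k = a then 1 else 0) :=
    Equiv.sum_comp (Equiv.addRight 1) (fun k => x (v k) + if v k = a then 1 else 0)
  simp only [v] at hshift hv_eq ⊢
  simp only [hfx, ← add_assoc, Finset.sum_add_distrib] at hshift ⊢
  rw [add_assoc, hshift, ← add_assoc, CharTwo.add_self_eq_zero, zero_add]
  simp [hv_eq]

end NegativeCycles

section FlipCycleConstruction

variable {n : ℕ} {f : St n → St n}

/-- Otherwise `d(x, f x)` would drop by one (if `f` does not move) or by two (if `f` moves in an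
unstable coordinate other than `p`), or there would be a negative loop at `p`. -/
lemma exists_flip_step (hf : NonExpansive f) (hloop : ∀ x i, hasEdge f x i i → x i = f x i)
    {x : St n} (hmin : ∀ y, hammingDist x (f x) ≤ hammingDist y (f y)) {p : Fin n}
    (hp : f x p ≠ x p) : ∃ p', f (x + uv p) = f x + uv p' ∧ f x p' = x p' := by
  have hdrop : hammingDist (x + uv p) (f x) + 1 = hammingDist x (f x) :=
    hammingDist_add_uv_of_ne (Ne.symm hp)
  have hmove : hammingDist (f x) (f (x + uv p)) ≤ 1 := by
    have := hf (x + uv p) x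
    rwa [hammingDist_add_uv_self, hammingDist_comm] at this
  have hmin' := hmin (x + uv p)
  rcases eq_or_exists_eq_add_uv_of_hammingDist_le_one hmove with hfix | ⟨p', hp'⟩
  · rw [hfix] at hmin'
    omega
  refine ⟨p', hp', ?_⟩
  by_contra hne
  have hpp : p' ≠ p := by
    rintro rfl
    exact hp (hloop x p' (by simp [hasEdge, hp'])).symm
  have hdrop' : hammingDist (f x + uv p') (x + uv p) + 1 = hammingDist (f x) (x + uv p) :=
    hammingDist_add_uv_of_ne (by rwa [add_uv_apply_of_ne _ hpp])
  rw [hp', hammingDist_comm (x + uv p)] at hmin'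
  rw [hammingDist_comm (x + uv p)] at hdrop
  omega

lemma exists_flip_step_of_eq_add (hf : NonExpansive f)
    (hloop : ∀ x i, hasEdge f x i i → x i = f x i) {y e : St n} {q : Fin n}
    (hmin : ∀ w, hammingDist y (f y) ≤ hammingDist w (f w)) (hfy : f y = y + e + uv q)
    (he : e q = 0) : ∃ q', f (y + uv q) = y + uv q + e + uv q' ∧ e q' = 0 := by
  have hq : f y q ≠ y q := by simp [hfy, he]
  obtain ⟨q', hfq, hq'⟩ := exists_flip_step hf hloop hmin hq
  have hqq' : q' ≠ q := by
    rintro rfl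
    exact hq hq'
  refine ⟨q', ?_, by simpa [hfy, hqq'] using hq'⟩
  rw [hfq, hfy]
  abel

lemma hammingDist_apply_of_eq_add {y e : St n} {q : Fin n} (hfy : f y = y + e + uv q)
    (he : e q = 0) : hammingDist y (f y) = hammingDist e 0 + 1 := by
  rw [hfy, add_assoc, hammingDist_self_add, hammingDist_comm, hammingDist_add_uv_of_eq (by simpa)]

lemma exists_flipCycle (hf : NonExpansive f) (hfix : ∀ z, f z ≠ z)
    (hloop : ∀ x i, hasEdge f x i i → x i = f x i) :
    ∃ (L : ℕ) (_ : NeZero L) (e : St n) (x : ZMod L → St n) (p : ZMod L → Fin n),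
      (∀ t, x (t + 1) = x t + uv (p t)) ∧ (∀ t, f (x t) = x t + e + uv (p t)) ∧
        ∀ t, e (p t) = 0 := by
  obtain ⟨x₀, -, hmin⟩ :=
    Finset.univ.exists_min_image (fun y => hammingDist y (f y)) Finset.univ_nonempty
  obtain ⟨p₀, hp₀⟩ := ne_iff.mp (hfix x₀)
  set e := f x₀ + x₀ + uv p₀
  have hfx₀ : f x₀ = x₀ + e + uv p₀ :=
    calc f x₀ = f x₀ + (x₀ + x₀) + (uv p₀ + uv p₀) := by simp only [St.add_self, add_zero]
      _ = x₀ + e + uv p₀ := by simp only [e]; abel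
  have he₀ : e p₀ = 0 := by
    simp only [e, Pi.add_apply, uv_apply, if_pos, ZMod.two_ne_iff_eq_add_one.mp hp₀]
    rw [add_right_comm (x₀ p₀), CharTwo.add_self_eq_zero, zero_add]
    rfl
  let S := {z : St n × Fin n // f z.1 = z.1 + e + uv z.2 ∧ e z.2 = 0}
  have : Nonempty S := ⟨⟨(x₀, p₀), hfx₀, he₀⟩⟩
  have hstep : ∀ z : S, ∃ z' : S, z'.1.1 = z.1.1 + uv z.1.2 := by
    rintro ⟨⟨y, q⟩, hfy, he⟩
    have hmin_y : ∀ w, hammingDist y (f y) ≤ hammingDist w (f w) := fun w => by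
      rw [hammingDist_apply_of_eq_add hfy he, ← hammingDist_apply_of_eq_add hfx₀ he₀]
      exact hmin w (Finset.mem_univ w)
    obtain ⟨q', hfq, he'⟩ := exists_flip_step_of_eq_add hf hloop hmin_y hfy he
    exact ⟨⟨(y + uv q, q'), hfq, he'⟩, rfl⟩
  obtain ⟨L, hL, z, hz⟩ := exists_zmod_cycle hstep
  exact ⟨L, hL, e, fun t => (z t).1.1, fun t => (z t).1.2, hz, fun t => (z t).2.1,
    fun t => (z t).2.2⟩

end FlipCycleConstruction

structure IsFlipCycle {n L : ℕ} (g : St n → St n) (x : ZMod L → St n) (p : ZMod L → Fin n) :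
    Prop where
  nonExpansive : NonExpansive g
  flip : ∀ t, x (t + 1) = x t + uv (p t)
  orbit : ∀ t, g (x t) = x (t + 1)

/-- The coordinate flipped right after `q` along the cycle; junk outside the range of `p`. -/
noncomputable def nextFlip {n L : ℕ} (p : ZMod L → Fin n) : Fin n → Fin n :=
  extend p (fun t => p (t + 1)) id

section Columns

variable {n L : ℕ} {x : ZMod L → St n} {p : ZMod L → Fin n}

lemma column_add_natCast (hx : ∀ t, x (t + 1) = x t + uv (p t)) (s : ZMod L) (q : Fin n)
    (k : ℕ) : x (s + k) q = x s q + ∑ j ∈ Finset.range k, if q = p (s + j) then 1 else 0 := by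
  induction k with
  | zero => simp
  | succ k ih => rw [Nat.cast_succ, ← add_assoc, hx, Pi.add_apply, ih, Finset.sum_range_succ,
      add_assoc, uv_apply]

lemma column_eq_of_notMem_range [NeZero L] (hx : ∀ t, x (t + 1) = x t + uv (p t)) {c : Fin n}
    (hc : c ∉ Set.range p) (s : ZMod L) : x s c = x 0 c := by
  have := column_add_natCast hx 0 c s.val
  rwa [Finset.sum_eq_zero fun j _ => if_neg fun h => hc ⟨_, h.symm⟩, add_zero, zero_add,
    ZMod.natCast_zmod_val] at this

lemma exists_column_ne (hx : ∀ t, x (t + 1) = x t + uv (p t)) {q : Fin n} (hq : q ∈ Set.range p)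
    (a : ZMod 2) : ∃ s, x s q ≠ a := by
  obtain ⟨t, rfl⟩ := hq
  by_contra! hconst
  have hflip := congrFun (hx t) (p t)
  simp [hconst t, hconst (t + 1)] at hflip

lemma eq_of_column_add_eq (hx : ∀ t, x (t + 1) = x t + uv (p t)) {c q : Fin n}
    (hq : q ∈ Set.range p) {K : ZMod 2} (h : ∀ s, x s c + x s q = K) : c = q := by
  obtain ⟨t, rfl⟩ := hq
  by_contra hne
  have hflip := h (t + 1)
  rw [hx, ← h t] at hflip
  simp [hne] at hflip

end Columns

namespace IsFlipCycle

variable {n L : ℕ} [NeZero L] {g : St n → St n} {x : ZMod L → St n} {p : ZMod L → Fin n}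

lemma hammingDist_succ (h : IsFlipCycle g x p) (t s : ZMod L) :
    hammingDist (x (t + 1)) (x (s + 1)) = hammingDist (x t) (x s) :=
  apply_perm_eq_of_forall_le ((Equiv.addRight 1).prodCongr (Equiv.addRight 1))
    (F := fun ts => hammingDist (x ts.1) (x ts.2))
    (fun ts => by simpa [← h.orbit] using h.nonExpansive (x ts.1) (x ts.2)) (t, s)

lemma column_succ_ne (h : IsFlipCycle g x p) {t s : ZMod L} {q c : Fin n}
    (hc : g (x t + uv q) = x (t + 1) + uv c) (hs : x t q ≠ x s q) :
    x (t + 1) c ≠ x (s + 1) c := by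
  intro hcs
  have hle := h.nonExpansive (x t + uv q) (x s)
  rw [hc, h.orbit, hammingDist_add_uv_of_eq hcs, h.hammingDist_succ] at hle
  have := hammingDist_add_uv_of_ne hs
  omega

lemma exists_image_add_uv (h : IsFlipCycle g x p) {t s : ZMod L} {q : Fin n}
    (hs : x t q ≠ x s q) : ∃ c, g (x t + uv q) = x (t + 1) + uv c := by
  have hle : hammingDist (x (t + 1)) (g (x t + uv q)) ≤ 1 := by
    have := h.nonExpansive (x t) (x t + uv q)
    rwa [h.orbit, hammingDist_comm (x t), hammingDist_add_uv_self] at this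
  refine (eq_or_exists_eq_add_uv_of_hammingDist_le_one hle).resolve_left fun hfix => ?_
  have hle' := h.nonExpansive (x t + uv q) (x s)
  rw [hfix, h.orbit, h.hammingDist_succ] at hle'
  have := hammingDist_add_uv_of_ne hs
  omega

/-- As `g (x (t + 1) + e^(p t)) = x (t + 1 + 1) + e^(p (t + 1))`, `column_succ_ne` shows that
`s ↦ s + 1` maps the states on the left into those on the right. Around the cycle these sets
cannot grow in size, so the inclusions are equalities. -/
lemma column_ne_iff (h : IsFlipCycle g x p) (t s : ZMod L) :
    x s (p t) ≠ x (t + 1) (p t) ↔ x (s + 1) (p (t + 1)) ≠ x (t + 1 + 1) (p (t + 1)) := by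
  have hstep : ∀ t s, x s (p t) ≠ x (t + 1) (p t) →
      x (s + 1) (p (t + 1)) ≠ x (t + 1 + 1) (p (t + 1)) := fun t s hs => by
    refine Ne.symm (h.column_succ_ne ?_ (Ne.symm hs))
    rw [h.flip (t + 1), St.add_add_cancel_right, h.flip t, St.add_add_cancel_right, ← h.flip,
      h.orbit]
  let B : ZMod L → Finset (ZMod L) := fun t =>
    Finset.univ.filter fun s => x s (p t) ≠ x (t + 1) (p t)
  have hsub : ∀ t, (B t).map (Equiv.addRight 1).toEmbedding ⊆ B (t + 1) := fun t => by
    intro u hu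
    obtain ⟨s, hs, rfl⟩ := Finset.mem_map.mp hu
    simp only [B, Finset.mem_filter, Finset.mem_univ, true_and] at hs ⊢
    exact hstep t s hs
  have hcard : ∀ t, (B (t + 1)).card = (B t).card := by
    have := apply_perm_eq_of_forall_le (Equiv.addRight 1).symm (F := fun t => (B t).card)
      fun t => by simpa [sub_eq_add_neg] using Finset.card_le_card (hsub (t - 1))
    intro t
    simpa using (this (t + 1)).symm
  have heq : (B t).map (Equiv.addRight 1).toEmbedding = B (t + 1) :=
    Finset.eq_of_subset_of_card_le (hsub t) (by simp [hcard])
  refine ⟨hstep t s, fun hs => ?_⟩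
  have hmem : s + 1 ∈ (B t).map (Equiv.addRight 1).toEmbedding := by
    rw [heq]
    simpa [B] using hs
  simpa [B] using hmem

lemma column_add_column_succ (h : IsFlipCycle g x p) (t s : ZMod L) :
    x s (p t) + x (s + 1) (p (t + 1)) = x (t + 1) (p t) + x (t + 1 + 1) (p (t + 1)) :=
  ZMod.two_ne_iff_ne_iff.mp (h.column_ne_iff t s)

lemma nextFlip_apply (h : IsFlipCycle g x p) (t : ZMod L) : nextFlip p (p t) = p (t + 1) := by
  refine FactorsThrough.extend_apply (fun t t' htt' => ?_) id t
  refine eq_of_column_add_eq h.flip ⟨t' + 1, rfl⟩ (K := x (t + 1) (p t) +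
    x (t + 1 + 1) (p (t + 1)) + (x (t' + 1) (p t') + x (t' + 1 + 1) (p (t' + 1)))) fun u => ?_
  have h1 := h.column_add_column_succ t (u - 1)
  have h2 := h.column_add_column_succ t' (u - 1)
  rw [sub_add_cancel] at h1 h2
  rw [← h1, ← h2, htt', add_add_add_comm, CharTwo.add_self_eq_zero, zero_add]

lemma nextFlip_iterate (h : IsFlipCycle g x p) (s : ZMod L) (k : ℕ) :
    (nextFlip p)^[k] (p s) = p (s + k) := by
  induction k with
  | zero => simp
  | succ k ih => rw [iterate_succ_apply', ih, h.nextFlip_apply, Nat.cast_succ, add_assoc]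

lemma mem_periodicPts (h : IsFlipCycle g x p) (s : ZMod L) :
    p s ∈ periodicPts (nextFlip p) :=
  mk_mem_periodicPts (NeZero.pos L) (by
    rw [IsPeriodicPt, IsFixedPt, h.nextFlip_iterate, ZMod.natCast_self, add_zero])

lemma minimalPeriod_apply (h : IsFlipCycle g x p) (s : ZMod L) :
    minimalPeriod (nextFlip p) (p s) = minimalPeriod (nextFlip p) (p 0) := by
  rw [← minimalPeriod_apply_iterate (h.mem_periodicPts 0) s.val, h.nextFlip_iterate, zero_add,
    ZMod.natCast_zmod_val]

/-- Each coordinate in the range of `p` is flipped exactly once in any `r` consecutive steps,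
where `r` is the period of `nextFlip` on the range of `p`. -/
lemma column_add_minimalPeriod (h : IsFlipCycle g x p) {q : Fin n} (hq : q ∈ Set.range p)
    (s : ZMod L) : x (s + minimalPeriod (nextFlip p) (p 0)) q = x s q + 1 := by
  obtain ⟨t, rfl⟩ := hq
  rw [column_add_natCast h.flip, ← h.minimalPeriod_apply s]
  simp_rw [← h.nextFlip_iterate s]
  rw [Finset.sum_boole, card_filter_eq_iterate_eq_one (h.mem_periodicPts s) (k := (t - s).val),
    Nat.cast_one]
  rw [h.nextFlip_iterate, ZMod.natCast_zmod_val, add_sub_cancel]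

lemma two_mul_card_column_ne (h : IsFlipCycle g x p) {q : Fin n} (hq : q ∈ Set.range p)
    (a : ZMod 2) : 2 * (Finset.univ.filter fun u => x u q ≠ a).card = L := by
  have hshift : (Finset.univ.filter fun u => x u q = a).card =
      (Finset.univ.filter fun u => x u q ≠ a).card :=
    Finset.card_equiv (Equiv.addRight (minimalPeriod (nextFlip p) (p 0) : ZMod L))
      fun u => by simp [h.column_add_minimalPeriod hq, ZMod.two_ne_iff_eq_add_one]
  have := Finset.card_filter_add_card_filter_not (s := Finset.univ) (fun u => x u q = a)
  rw [Finset.card_univ, ZMod.card] at this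
  simp only [ne_eq] at hshift ⊢
  omega

/-- The column of the coordinate `c` flipped by `g` separates from `x (t + 1)` all the states that
the column of `p (t₀ + 1)` separates from it; both columns are balanced, so they agree up to a
constant. -/
lemma image_add_uv (h : IsFlipCycle g x p) {q : Fin n} (hq : q ∈ Set.range p) (t : ZMod L) :
    g (x t + uv q) = x (t + 1) + uv (nextFlip p q) := by
  obtain ⟨t₀, rfl⟩ := hq
  rw [h.nextFlip_apply]
  obtain ⟨s₀, hs₀⟩ := exists_column_ne h.flip ⟨t₀, rfl⟩ (x t (p t₀))
  obtain ⟨c, hc⟩ := h.exists_image_add_uv (Ne.symm hs₀)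
  have hsub : ∀ u, x u (p (t₀ + 1)) ≠ x (t + 1) (p (t₀ + 1)) → x u c ≠ x (t + 1) c := by
    intro u hu
    have hne : x t (p t₀) ≠ x (u - 1) (p t₀) := by
      intro heq
      have hcol := h.column_add_column_succ t₀ (u - 1)
      rw [sub_add_cancel, ← heq, ← h.column_add_column_succ t₀ t] at hcol
      exact hu (add_left_cancel hcol)
    simpa using Ne.symm (h.column_succ_ne hc hne)
  have hc_mem : c ∈ Set.range p := by
    by_contra hc'
    obtain ⟨u, hu⟩ := exists_column_ne h.flip ⟨t₀ + 1, rfl⟩ (x (t + 1) (p (t₀ + 1)))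
    exact hsub u hu (by rw [column_eq_of_notMem_range h.flip hc' u,
      column_eq_of_notMem_range h.flip hc' (t + 1)])
  have hfilter : (Finset.univ.filter fun u => x u (p (t₀ + 1)) ≠ x (t + 1) (p (t₀ + 1))) =
      Finset.univ.filter fun u => x u c ≠ x (t + 1) c := by
    refine Finset.eq_of_subset_of_card_le (fun u => by simpa using hsub u) ?_
    have := h.two_mul_card_column_ne hc_mem (x (t + 1) c)
    have := h.two_mul_card_column_ne ⟨t₀ + 1, rfl⟩ (x (t + 1) (p (t₀ + 1)))
    omega
  have hcq : c = p (t₀ + 1) :=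
    eq_of_column_add_eq h.flip ⟨t₀ + 1, rfl⟩ fun u =>
      ZMod.two_ne_iff_ne_iff.mp (by simpa using (Finset.ext_iff.mp hfilter u).symm)
  rwa [hcq] at hc

end IsFlipCycle

lemma hasNegCycleAt_of_flipCycle {n L : ℕ} [NeZero L] {f : St n → St n} {e : St n}
    {x : ZMod L → St n} {p : ZMod L → Fin n} (hf : NonExpansive f)
    (hx : ∀ t, x (t + 1) = x t + uv (p t)) (hfx : ∀ t, f (x t) = x t + e + uv (p t))
    (he : ∀ t, e (p t) = 0) : hasNegCycleAt f (x 0) := by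
  have h : IsFlipCycle (fun y => f y + e) x p := by
    refine ⟨hf.add_const e, hx, fun t => ?_⟩
    rw [hfx, hx, add_right_comm, St.add_add_cancel_right]
  have hflip : ∀ k, f (x 0 + uv ((nextFlip p)^[k] (p 0))) =
      f (x 0) + uv ((nextFlip p)^[k + 1] (p 0)) := fun k => by
    refine add_right_cancel (b := e) ?_
    rw [h.image_add_uv ⟨_, (h.nextFlip_iterate 0 k).symm⟩, add_right_comm,
      ← iterate_succ_apply' (nextFlip p)]
    exact congrArg (· + uv _) (h.orbit 0).symm
  refine hasNegCycleAt_of_mem_periodicPts (h.mem_periodicPts 0) (fun k => ?_) (fun k => ?_)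
  · simp [hasEdge, hflip]
  · rw [h.nextFlip_iterate, hfx]
    simp [he]

/-- If a non-expansive Boolean network (`d(f(x), f(y)) ≤ d(x,y)` for the Hamming
distance) has a cyclic attractor, then it has a local negative cycle. -/
theorem stmt_12 (n : ℕ) (f : St n → St n)
    (hexp : ∀ x y : St n, hammingDist (f x) (f y) ≤ hammingDist x y)
    (hattr : ∃ A : Set (St n), IsCyclicAttractor f A) :
    ∃ x, hasNegCycleAt f x := by
  by_cases hloop : ∃ x i, hasEdge f x i i ∧ x i ≠ f x i
  · obtain ⟨x, i, hedge, hneg⟩ := hloop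
    exact ⟨x, hasNegCycleAt_of_loop hedge hneg⟩
  push Not at hloop
  obtain ⟨A, hA⟩ := hattr
  obtain ⟨L, _, e, x, p, hx, hfx, he⟩ := exists_flipCycle hexp (hA.apply_ne_self hexp) hloop
  exact ⟨x 0, hasNegCycleAt_of_flipCycle hexp hx hfx he⟩
end

section
/- Let f : F_2^n → F_2^n be a Boolean network with ∂_n f_n(x) = 0 for all x, and let f' : F_2^{n-1} → F_2^{n-1} be its reduction over coordinate n. Then for all i, j ∈ {1,…,n-1} and all x ∈ F_2^{n-1}: ∂_j f'_i(x) = ∂_j f_i(x') + ∂_j f_n(x') · ∂_n f_i(x' + e^j), where x' = (x, f_n(x,0)) and the sum and product are taken in F_2. -/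
/-- The discrete partial derivative `∂_j g_i (x) = g_i(x) + g_i(x + e^j) ∈ F_2`. -/
def pD {m : ℕ} (g : St m → St m) (j i : Fin m) (x : St m) : ZMod 2 :=
  g (x + uv j) i + g x i

lemma zmod2_cases_s13 : ∀ b : ZMod 2, b = 0 ∨ b = 1 := by decide

lemma snoc_add_uv {n : ℕ} (z : St n) (b : ZMod 2) (j : Fin n) :
    Fin.snoc z b + uv j.castSucc = Fin.snoc (z + uv j) b := by
  funext k
  induction k using Fin.lastCases with
  | last => simp [uv, Pi.add_apply, (Fin.castSucc_lt_last j).ne']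
  | cast k => simp [uv, Pi.add_apply, Fin.castSucc_inj]

lemma snoc_add_uv_last {n : ℕ} (z : St n) (b : ZMod 2) :
    Fin.snoc z b + uv (Fin.last n) = Fin.snoc z (b + 1) := by
  funext k
  induction k using Fin.lastCases with
  | last => simp [uv, Pi.add_apply]
  | cast k => simp [uv, Pi.add_apply, (Fin.castSucc_lt_last k).ne]

lemma key_zmod2 (g : ZMod 2 → ZMod 2) (B b c : ZMod 2) :
    g c + B = g b + B + (c + b) * (g (b + 1) + g b) := by
  have h0 : (0 : ZMod 2) + 1 = 1 := by decide
  have h1 : (1 : ZMod 2) + 1 = 0 := by decide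
  have hd : ∀ A0 A1 B : ZMod 2,
      (A0 + B = A0 + B + (0 + 0) * (A1 + A0)) ∧
      (A1 + B = A0 + B + (1 + 0) * (A1 + A0)) ∧
      (A0 + B = A1 + B + (0 + 1) * (A0 + A1)) ∧
      (A1 + B = A1 + B + (1 + 1) * (A0 + A1)) := by decide
  rcases zmod2_cases_s13 b with hb | hb <;> rcases zmod2_cases_s13 c with hc | hc <;>
      subst hb <;> subst hc
  · rw [h0]; exact (hd (g 0) (g 1) B).1
  · rw [h0]; exact (hd (g 0) (g 1) B).2.1
  · rw [h1]; exact (hd (g 0) (g 1) B).2.2.1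
  · rw [h1]; exact (hd (g 0) (g 1) B).2.2.2

/-- Jacobian formula for reduction: if `G(f)` has no loop on the last coordinate and
`f'` is the reduction of `f` over it, then
`∂_j f'_i(x) = ∂_j f_i(x') + ∂_j f_n(x') · ∂_n f_i(x' + e^j)`. -/
theorem stmt_13 (n : ℕ) (f : St (n + 1) → St (n + 1)) (f' : St n → St n)
    (hloop : ∀ x : St (n + 1), pD f (Fin.last n) (Fin.last n) x = 0)
    (hf' : ∀ (x : St n) (i : Fin n), f' x i = f (extn f x) i.castSucc)
    (i j : Fin n) (x : St n) :
    pD f' j i x =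
      pD f j.castSucc i.castSucc (extn f x) +
        pD f j.castSucc (Fin.last n) (extn f x) *
          pD f (Fin.last n) i.castSucc (extn f x + uv j.castSucc) := by
  have h2 : ∀ A B : ZMod 2, A + B = 0 → A = B := by decide
  have hindep : ∀ (z : St n) (b : ZMod 2),
      f (Fin.snoc z b) (Fin.last n) = f (Fin.snoc z 0) (Fin.last n) := by
    intro z b
    rcases zmod2_cases_s13 b with hb | hb
    · rw [hb]
    · rw [hb]
      have h := hloop (Fin.snoc z 0)
      unfold pD at h
      rw [snoc_add_uv_last, zero_add] at h
      exact h2 _ _ h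
  have h1 : extn f x + uv j.castSucc
      = Fin.snoc (x + uv j) (f (Fin.snoc x 0) (Fin.last n)) := by
    rw [show extn f x = Fin.snoc x (f (Fin.snoc x 0) (Fin.last n)) from rfl, snoc_add_uv]
  unfold pD
  rw [hf', hf', h1, snoc_add_uv_last,
    show extn f (x + uv j)
      = Fin.snoc (x + uv j) (f (Fin.snoc (x + uv j) 0) (Fin.last n)) from rfl,
    show extn f x = Fin.snoc x (f (Fin.snoc x 0) (Fin.last n)) from rfl,
    hindep (x + uv j) (f (Fin.snoc x 0) (Fin.last n)),
    hindep x (f (Fin.snoc x 0) (Fin.last n))]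
  exact key_zmod2 (fun b => f (Fin.snoc (x + uv j) b) i.castSucc)
    (f (Fin.snoc x (f (Fin.snoc x 0) (Fin.last n))) i.castSucc)
    (f (Fin.snoc x 0) (Fin.last n)) (f (Fin.snoc (x + uv j) 0) (Fin.last n))
end
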